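/- arXiv:2401.10719 — 7 statements merged into one kernel-verified Lean document; each statement's English description precedes it below -/
import Mathlib

section
/- Let σ ∈ S_n and let 2 ≤ i ≤ n−1 be such that the values i and i+1 do not appear in consecutive positions in σ. Then the permutation σ' obtained from σ by swapping the values i and i+1 has the same peak set as σ. -/
/-- Hamming distance on permutations of `Fin n`. -/
def dH (n : ℕ) (σ ρ : Equiv.Perm (Fin n)) : ℕ :=
  (Finset.univ.filter (fun i => σ i ≠ ρ i)).card

/-- ℓ∞ distance on permutations of `Fin n`. -/
def dL (n : ℕ) (σ ρ : Equiv.Perm (Fin n)) : ℕ :=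
  Finset.univ.sup (fun i => (((σ i : ℕ) : ℤ) - ((ρ i : ℕ) : ℤ)).natAbs)

/-- Kendall-Tau distance: number of deranged pairs. -/
def dK (n : ℕ) (σ ρ : Equiv.Perm (Fin n)) : ℕ :=
  (Finset.univ.filter (fun p : Fin n × Fin n =>
    p.1 < p.2 ∧ (((σ p.1 : ℕ) : ℤ) - ((σ p.2 : ℕ) : ℤ)) *
      (((ρ p.1 : ℕ) : ℤ) - ((ρ p.2 : ℕ) : ℤ)) < 0)).card

/-- `τ` is an adjacent transposition `(i, i+1)`. -/
def IsAdjTrans (n : ℕ) (τ : Equiv.Perm (Fin n)) : Prop :=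
  ∃ (i : ℕ) (h : i + 1 < n), τ = Equiv.swap ⟨i, Nat.lt_of_succ_lt h⟩ ⟨i + 1, h⟩

/-- Minimal number of adjacent transpositions transforming `σ` into `ρ`
(acting by left multiplication). -/
noncomputable def dK' (n : ℕ) (σ ρ : Equiv.Perm (Fin n)) : ℕ :=
  sInf {m | ∃ L : List (Equiv.Perm (Fin n)), L.length = m ∧
    (∀ τ ∈ L, IsAdjTrans n τ) ∧ L.prod * σ = ρ}

/-- The peak set of `σ`, with 1-based positions: `j ∈ {2, …, n-1}` is a peak if
`σ_{j-1} < σ_j > σ_{j+1}` in one-line notation (so 0-based indices `j-2, j-1, j`). -/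
def peaks (n : ℕ) (σ : Equiv.Perm (Fin n)) : Finset ℕ :=
  (Finset.Icc 2 (n - 1)).filter (fun j =>
    ∃ (h1 : j - 2 < n) (h2 : j - 1 < n) (h3 : j < n),
      σ ⟨j - 2, h1⟩ < σ ⟨j - 1, h2⟩ ∧ σ ⟨j, h3⟩ < σ ⟨j - 1, h2⟩)

/-!
Whether a position is a peak depends only on how the values at neighbouring positions compare.
Swapping two values `a ⋖ b` changes the comparison of `u` and `v` only when `{u, v} = {a, b}`,
since no value lies strictly between `a` and `b`; when `a` and `b` sit at non-neighbouring
positions, no pair of neighbouring positions carries exactly these two values.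
-/

open Equiv

theorem Equiv.swap_apply_lt_swap_apply_iff {α : Type*} [LinearOrder α] {a b u v : α}
    (hab : a ⋖ b) (huv : ¬(u = a ∧ v = b)) (hvu : ¬(u = b ∧ v = a)) :
    swap a b u < swap a b v ↔ u < v := by
  have outside {c : α} (hca : c ≠ a) (hcb : c ≠ b) : (a < c ↔ b < c) ∧ (c < a ↔ c < b) :=
    ⟨⟨fun h => (not_lt.1 fun h' => hab.2 h h').lt_of_ne' hcb, hab.lt.trans⟩,
      ⟨fun h => h.trans hab.lt, fun h => (hab.le_of_lt h).lt_of_ne hca⟩⟩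
  rw [swap_apply_def, swap_apply_def]
  split_ifs <;> simp_all

theorem swap_mul_apply_lt_iff_of_not_covBy {α : Type*} [LinearOrder α] {σ : Perm α}
    {a b x y : α} (hab : a ⋖ b) (hσab : ¬σ⁻¹ a ⋖ σ⁻¹ b) (hσba : ¬σ⁻¹ b ⋖ σ⁻¹ a)
    (hxy : x ⋖ y ∨ y ⋖ x) : (swap a b * σ) x < (swap a b * σ) y ↔ σ x < σ y := by
  refine swap_apply_lt_swap_apply_iff hab ?_ ?_ <;> rintro ⟨rfl, rfl⟩ <;> simp_all

theorem Fin.covBy_iff_val_add_one_eq {n : ℕ} {p q : Fin n} : p ⋖ q ↔ (p : ℕ) + 1 = q :=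
  Fin.covBy_iff.trans Nat.covBy_iff_add_one_eq

theorem Fin.not_covBy_of_natAbs_sub_ne_one {n : ℕ} {p q : Fin n}
    (h : ((p : ℤ) - (q : ℤ)).natAbs ≠ 1) : ¬p ⋖ q ∧ ¬q ⋖ p := by
  simp only [Fin.covBy_iff_val_add_one_eq]
  omega

theorem peaks_eq_of_covBy_lt_iff {n : ℕ} {σ τ : Perm (Fin n)}
    (h : ∀ x y : Fin n, x ⋖ y ∨ y ⋖ x → (σ x < σ y ↔ τ x < τ y)) :
    peaks n σ = peaks n τ := by
  ext j
  simp only [peaks, Finset.mem_filter, Finset.mem_Icc]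
  refine and_congr_right fun hj =>
    exists_congr fun _ => exists_congr fun _ => exists_congr fun _ => and_congr ?_ ?_
  · exact h _ _ (.inl (Fin.covBy_iff_val_add_one_eq.2 (by dsimp only; omega)))
  · exact h _ _ (.inr (Fin.covBy_iff_val_add_one_eq.2 (by dsimp only; omega)))

/-- swapping non-consecutively-placed values `i` and `i+1`
(1-based values, i.e. 0-based `i-1` and `i`) preserves the peak set. -/
theorem swap_values_preserves_peaks (n i : ℕ) (σ : Equiv.Perm (Fin n))
    (hi2 : 2 ≤ i) (hin : i ≤ n - 1)
    (hnc : ((((σ⁻¹ ⟨i - 1, by omega⟩ : Fin n) : ℕ) : ℤ) -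
        (((σ⁻¹ ⟨i, by omega⟩ : Fin n) : ℕ) : ℤ)).natAbs ≠ 1) :
    peaks n (Equiv.swap ⟨i - 1, by omega⟩ ⟨i, by omega⟩ * σ) = peaks n σ := by
  obtain ⟨hσab, hσba⟩ := Fin.not_covBy_of_natAbs_sub_ne_one hnc
  exact peaks_eq_of_covBy_lt_iff fun x y hxy =>
    swap_mul_apply_lt_iff_of_not_covBy (Fin.covBy_iff_val_add_one_eq.2 (by dsimp only; omega))
      hσab hσba hxy
end

section
/- For n ≥ 2 and any admissible peak set S (i.e., P(S;n) is nonempty), the minimum Hamming distance between distinct permutations in P(S;n) is 2, the minimum ℓ∞ distance is 1, and the minimum Kendall-Tau distance is 1. -/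
/-! Distinct permutations differ in at least two positions, in at least one value, and in the
relative order of at least one pair: otherwise `ρ * σ⁻¹` would be a strictly monotone
permutation of `Fin n`, hence the identity. Conversely, swapping the values `0` and `1` keeps
the peak set, because a peak value exceeds two distinct values and so is at least `2`; this
swap changes exactly two positions, each value by one, and the order of exactly one pair. -/

open Equiv Finset

section Distances

variable {n : ℕ}

lemma dH_eq_card_support (σ ρ : Perm (Fin n)) : dH n σ ρ = #(ρ * σ⁻¹).support := by
  rw [dH, ← card_map σ.toEmbedding]
  congr 1
  ext x
  simp [eq_comm, Perm.mul_apply]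

lemma two_le_dH {σ ρ : Perm (Fin n)} (h : σ ≠ ρ) : 2 ≤ dH n σ ρ := by
  rw [dH_eq_card_support]
  exact Perm.two_le_card_support_of_ne_one (mul_inv_eq_one.not.mpr h.symm)

lemma dH_swap_mul {a b : Fin n} (hab : a ≠ b) (σ : Perm (Fin n)) : dH n σ (swap a b * σ) = 2 := by
  rw [dH_eq_card_support, mul_inv_cancel_right, Perm.card_support_swap hab]

lemma one_le_dL {σ ρ : Perm (Fin n)} (h : σ ≠ ρ) : 1 ≤ dL n σ ρ := by
  obtain ⟨i, hi⟩ := not_forall.mp (mt Perm.ext h)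
  refine le_trans ?_ (le_sup (f := fun i => (((σ i : ℕ) : ℤ) - ((ρ i : ℕ) : ℤ)).natAbs) (mem_univ i))
  have : (σ i : ℕ) ≠ ρ i := Fin.val_ne_of_ne hi
  omega

lemma dL_swap_mul_le_one {a b : Fin n} (hab : (b : ℕ) = a + 1) (σ : Perm (Fin n)) :
    dL n σ (swap a b * σ) ≤ 1 := by
  refine Finset.sup_le fun i _ => ?_
  rw [Perm.mul_apply, swap_apply_def]
  split_ifs <;> subst_vars <;> omega

lemma eq_of_swap_discordant {a b : Fin n} (hab : (b : ℕ) = a + 1) {x y : Fin n}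
    (h : (((x : ℕ) : ℤ) - (y : ℕ)) * (((swap a b x : ℕ) : ℤ) - (swap a b y : ℕ)) < 0) :
    x = a ∧ y = b ∨ x = b ∧ y = a := by
  rw [mul_neg_iff] at h
  simp only [swap_apply_def] at h
  split_ifs at h <;> subst_vars <;> omega

lemma apply_lt_apply_of_dK_eq_zero {σ ρ : Perm (Fin n)} (h : dK n σ ρ = 0) {i j : Fin n}
    (hσ : σ i < σ j) : ρ i < ρ j := by
  have hconc : ∀ k l : Fin n, k < l →
      0 ≤ (((σ k : ℕ) : ℤ) - (σ l : ℕ)) * (((ρ k : ℕ) : ℤ) - (ρ l : ℕ)) := by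
    intro k l hkl
    by_contra! hneg
    exact filter_eq_empty_iff.mp (card_eq_zero.mp h) (mem_univ (k, l)) ⟨hkl, hneg⟩
  have hij : i ≠ j := fun e => hσ.ne (congrArg σ e)
  have hρ : (ρ i : ℕ) ≠ ρ j := Fin.val_ne_of_ne (ρ.injective.ne hij)
  have hσ' : (σ i : ℕ) < σ j := hσ
  show (ρ i : ℕ) < ρ j
  rcases lt_or_gt_of_ne hij with hlt | hgt
  · rcases mul_nonneg_iff.mp (hconc i j hlt) with h' | h' <;> omega
  · rcases mul_nonneg_iff.mp (hconc j i hgt) with h' | h' <;> omega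

lemma one_le_dK {σ ρ : Perm (Fin n)} (h : σ ≠ ρ) : 1 ≤ dK n σ ρ := by
  rw [Nat.one_le_iff_ne_zero]
  intro h0
  have hmono : StrictMono (ρ * σ⁻¹) := fun x y hxy =>
    apply_lt_apply_of_dK_eq_zero h0 (by simpa using hxy)
  exact h (mul_inv_eq_one.mp (Perm.ext (congrFun hmono.eq_id))).symm

lemma dK_swap_mul_le_one {a b : Fin n} (hab : (b : ℕ) = a + 1) (σ : Perm (Fin n)) :
    dK n σ (swap a b * σ) ≤ 1 := by
  rw [dK]
  refine card_le_one.mpr fun p hp q hq => ?_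
  obtain ⟨-, hpq, hp'⟩ := mem_filter.mp hp
  obtain ⟨-, hqp, hq'⟩ := mem_filter.mp hq
  replace hp' := eq_of_swap_discordant hab hp'
  replace hq' := eq_of_swap_discordant hab hq'
  obtain ⟨p₁, p₂⟩ := p
  obtain ⟨q₁, q₂⟩ := q
  simp only [← Equiv.eq_symm_apply] at hp' hq'
  rcases hp' with ⟨rfl, rfl⟩ | ⟨rfl, rfl⟩ <;> rcases hq' with ⟨rfl, rfl⟩ | ⟨rfl, rfl⟩
  all_goals first | rfl | exact absurd hpq hqp.asymm

end Distances

section Peaks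

variable {n : ℕ}

lemma two_le_of_lt_of_lt {x y c : Fin n} (hxy : x ≠ y) (hx : x < c) (hy : y < c) :
    2 ≤ (c : ℕ) := by
  have := Fin.val_ne_of_ne hxy
  have : (x : ℕ) < c := hx
  have : (y : ℕ) < c := hy
  omega

lemma swap_lt_swap_iff {z o : Fin n} (hz : (z : ℕ) = 0) (ho : (o : ℕ) = 1) {x c : Fin n}
    (hc : 2 ≤ (c : ℕ)) : swap z o x < swap z o c ↔ x < c := by
  simp only [swap_apply_def, Fin.lt_def]
  split_ifs <;> subst_vars <;> omega

lemma peaks_subset_peaks_swap_mul {z o : Fin n} (hz : (z : ℕ) = 0) (ho : (o : ℕ) = 1)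
    (σ : Perm (Fin n)) : peaks n σ ⊆ peaks n (swap z o * σ) := by
  intro j hj
  rw [peaks, mem_filter] at hj ⊢
  obtain ⟨hjI, h1, h2, h3, hleft, hright⟩ := hj
  have hj2 := (mem_Icc.mp hjI).1
  have hne : σ ⟨j - 2, h1⟩ ≠ σ ⟨j, h3⟩ := σ.injective.ne (by simp [Fin.ext_iff]; omega)
  have hpeak := two_le_of_lt_of_lt hne hleft hright
  exact ⟨hjI, h1, h2, h3, (swap_lt_swap_iff hz ho hpeak).mpr hleft,
    (swap_lt_swap_iff hz ho hpeak).mpr hright⟩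

lemma peaks_swap_mul {z o : Fin n} (hz : (z : ℕ) = 0) (ho : (o : ℕ) = 1)
    (σ : Perm (Fin n)) : peaks n (swap z o * σ) = peaks n σ := by
  refine (Subset.antisymm ?_ (peaks_subset_peaks_swap_mul hz ho σ))
  simpa only [← mul_assoc, swap_mul_self, one_mul] using
    peaks_subset_peaks_swap_mul hz ho (swap z o * σ)

end Peaks

/-- for an admissible peak set `S`, the minimum Hamming, ℓ∞ and
Kendall-Tau distances between distinct permutations in `P(S;n)` are 2, 1, 1. -/
theorem min_distances_on_peak_class (n : ℕ) (hn : 2 ≤ n) (S : Finset ℕ)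
    (hS : ∃ σ : Equiv.Perm (Fin n), peaks n σ = S) :
    IsLeast {d | ∃ σ ρ : Equiv.Perm (Fin n),
      peaks n σ = S ∧ peaks n ρ = S ∧ σ ≠ ρ ∧ d = dH n σ ρ} 2 ∧
    IsLeast {d | ∃ σ ρ : Equiv.Perm (Fin n),
      peaks n σ = S ∧ peaks n ρ = S ∧ σ ≠ ρ ∧ d = dL n σ ρ} 1 ∧
    IsLeast {d | ∃ σ ρ : Equiv.Perm (Fin n),
      peaks n σ = S ∧ peaks n ρ = S ∧ σ ≠ ρ ∧ d = dK n σ ρ} 1 := by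
  obtain ⟨σ, rfl⟩ := hS
  let z : Fin n := ⟨0, by omega⟩
  let o : Fin n := ⟨1, hn⟩
  have hzo : z ≠ o := by simp [z, o, Fin.ext_iff]
  have hρ : peaks n (swap z o * σ) = peaks n σ := peaks_swap_mul rfl rfl σ
  have hne : σ ≠ swap z o * σ := fun h => hzo (swap_eq_one_iff.mp (mul_eq_right.mp h.symm))
  refine ⟨⟨⟨σ, _, rfl, hρ, hne, (dH_swap_mul hzo σ).symm⟩, ?_⟩,
    ⟨⟨σ, _, rfl, hρ, hne, ((dL_swap_mul_le_one rfl σ).antisymm (one_le_dL hne)).symm⟩, ?_⟩,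
    ⟨⟨σ, _, rfl, hρ, hne, ((dK_swap_mul_le_one rfl σ).antisymm (one_le_dK hne)).symm⟩, ?_⟩⟩
  · rintro _ ⟨σ', ρ', -, -, h, rfl⟩
    exact two_le_dH h
  · rintro _ ⟨σ', ρ', -, -, h, rfl⟩
    exact one_le_dL h
  · rintro _ ⟨σ', ρ', -, -, h, rfl⟩
    exact one_le_dK h
end

section
/- For n ≥ 2 and any admissible peak set S, and any σ, ρ ∈ P(S;n), the Kendall-Tau distance satisfies d_K(σ,ρ) ≤ n(n−1)/2 − 2|S|. -/
/-!
Each peak `j` of a permutation forces an ascent at the adjacent pair of positions `(j-2, j-1)`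
and a descent at `(j-1, j)` (0-based). Peaks are never adjacent, so the `|S|` peaks give
`2|S|` distinct adjacent pairs, and two permutations with the same peak set order all of them
the same way. None of these pairs is discordant, which leaves at most `n(n-1)/2 - 2|S|` of the
`n(n-1)/2` pairs `i < j` for the Kendall-Tau distance.
-/

open Finset

lemma dK_add_card_le {n : ℕ} {σ ρ : Equiv.Perm (Fin n)} (C : Finset (Fin n × Fin n))
    (hlt : ∀ p ∈ C, p.1 < p.2) (hC : ∀ p ∈ C, (σ p.1 < σ p.2 ↔ ρ p.1 < ρ p.2)) :
    dK n σ ρ + #C ≤ n * (n - 1) / 2 := by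
  set D := univ.filter fun p : Fin n × Fin n =>
    p.1 < p.2 ∧ (((σ p.1 : ℕ) : ℤ) - ((σ p.2 : ℕ) : ℤ)) *
      (((ρ p.1 : ℕ) : ℤ) - ((ρ p.2 : ℕ) : ℤ)) < 0
  have hdisj : Disjoint D C := by
    refine disjoint_right.2 fun p hp hpD => ?_
    obtain ⟨-, hneg⟩ := (mem_filter.1 hpD).2
    have hne : p.1 ≠ p.2 := (hlt p hp).ne
    rcases lt_or_gt_of_ne (σ.injective.ne hne) with hσ | hσ
    · have hρ : ρ p.1 < ρ p.2 := (hC p hp).1 hσ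
      have h1 : (σ p.1 : ℕ) < σ p.2 := hσ
      have h2 : (ρ p.1 : ℕ) < ρ p.2 := hρ
      nlinarith
    · have hρ : ρ p.2 < ρ p.1 :=
        lt_of_le_of_ne (not_lt.1 fun h => hσ.not_gt ((hC p hp).2 h)) (ρ.injective.ne hne.symm)
      have h1 : (σ p.2 : ℕ) < σ p.1 := hσ
      have h2 : (ρ p.2 : ℕ) < ρ p.1 := hρ
      nlinarith
  have hsub : D ∪ C ⊆ univ.filter fun p : Fin n × Fin n => p.1 < p.2 :=
    union_subset (fun p hp => mem_filter.2 ⟨mem_univ _, (mem_filter.1 hp).2.1⟩)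
      (fun p hp => mem_filter.2 ⟨mem_univ _, hlt p hp⟩)
  calc dK n σ ρ + #C = #(D ∪ C) := (card_union_of_disjoint hdisj).symm
    _ ≤ #{p : Fin n × Fin n | p.1 < p.2} := card_le_card hsub
    _ = n * (n - 1) / 2 := by
      rw [Fintype.card_product_filter_lt, Fintype.card_fin, Nat.choose_two_right]

section Peaks

variable {n : ℕ} (σ : Equiv.Perm (Fin n))

lemma two_le_and_lt_of_mem_peaks {j : ℕ} (h : j ∈ peaks n σ) : 2 ≤ j ∧ j < n := by
  obtain ⟨hj, -, -, h3, -⟩ := mem_filter.1 h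
  exact ⟨(mem_Icc.1 hj).1, h3⟩

lemma lt_of_add_two_mem_peaks {a b : Fin n} (hab : (b : ℕ) = a + 1)
    (h : (a : ℕ) + 2 ∈ peaks n σ) : σ a < σ b := by
  obtain ⟨-, _, _, -, hrise, -⟩ := mem_filter.1 h
  convert hrise using 2 <;> ext <;> simp [hab]

lemma lt_of_add_one_mem_peaks {a b : Fin n} (hab : (b : ℕ) = a + 1)
    (h : (a : ℕ) + 1 ∈ peaks n σ) : σ b < σ a := by
  obtain ⟨-, -, _, _, -, hfall⟩ := mem_filter.1 h
  convert hfall using 2 <;> ext <;> simp [hab]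

lemma add_one_notMem_peaks {j : ℕ} (h : j ∈ peaks n σ) : j + 1 ∉ peaks n σ := by
  intro h'
  obtain ⟨-, -, h2, h3, -, hfall⟩ := mem_filter.1 h
  obtain ⟨-, g1, g2, -, hrise, -⟩ := mem_filter.1 h'
  have e1 : (⟨j + 1 - 2, g1⟩ : Fin n) = ⟨j - 1, h2⟩ := Fin.ext (by simp)
  have e2 : (⟨j + 1 - 1, g2⟩ : Fin n) = ⟨j, h3⟩ := Fin.ext (by simp)
  rw [e1, e2] at hrise
  exact hrise.not_gt hfall

end Peaks

def adjacentPairs (n : ℕ) (T : Finset ℕ) : Finset (Fin n × Fin n) :=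
  univ.filter fun p => (p.1 : ℕ) ∈ T ∧ (p.2 : ℕ) = p.1 + 1

lemma card_adjacentPairs {n : ℕ} {T : Finset ℕ} (hT : ∀ i ∈ T, i + 1 < n) :
    #(adjacentPairs n T) = #T := by
  refine card_nbij (fun p => (p.1 : ℕ)) (fun p hp => (mem_filter.1 hp).2.1) ?_ ?_
  · intro p hp q hq h
    have hp2 := (mem_filter.1 hp).2.2
    have hq2 := (mem_filter.1 hq).2.2
    exact Prod.ext (Fin.ext h) (Fin.ext (by simp only at h; omega))
  · intro i hi
    exact ⟨(⟨i, by grind⟩, ⟨i + 1, hT i hi⟩), by simpa [adjacentPairs] using hi, rfl⟩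

def flankStarts (S : Finset ℕ) : Finset ℕ :=
  S.image (· - 2) ∪ S.image (· - 1)

lemma lt_of_mem_adjacentPairs {n : ℕ} {T : Finset ℕ} {p : Fin n × Fin n}
    (hp : p ∈ adjacentPairs n T) : p.1 < p.2 := by
  grind [adjacentPairs, Fin.lt_def]

lemma card_flankStarts {S : Finset ℕ} (h2 : ∀ j ∈ S, 2 ≤ j) (hsep : ∀ j ∈ S, j + 1 ∉ S) :
    #(flankStarts S) = 2 * #S := by
  have hdisj : Disjoint (S.image (· - 2)) (S.image (· - 1)) := by
    simp only [disjoint_left, mem_image, not_exists, not_and]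
    rintro _ ⟨j, hj, rfl⟩ k hk hkj
    exact hsep k hk (by grind)
  rw [flankStarts, card_union_of_disjoint hdisj,
    card_image_of_injOn fun a ha b hb h => by grind,
    card_image_of_injOn fun a ha b hb h => by grind]
  ring

lemma lt_iff_of_mem_adjacentPairs_flankStarts_peaks {n : ℕ} (σ : Equiv.Perm (Fin n))
    {p : Fin n × Fin n} (hp : p ∈ adjacentPairs n (flankStarts (peaks n σ))) :
    σ p.1 < σ p.2 ↔ (p.1 : ℕ) + 2 ∈ peaks n σ := by
  obtain ⟨-, hstart, hadj⟩ := mem_filter.1 hp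
  rcases mem_union.1 hstart with hrise | hfall
  · obtain ⟨j, hj, hjp⟩ := mem_image.1 hrise
    have hpj : (p.1 : ℕ) + 2 = j := by have := two_le_and_lt_of_mem_peaks σ hj; omega
    exact iff_of_true (lt_of_add_two_mem_peaks σ hadj (hpj ▸ hj)) (hpj ▸ hj)
  · obtain ⟨j, hj, hjp⟩ := mem_image.1 hfall
    have hpj : (p.1 : ℕ) + 1 = j := by have := two_le_and_lt_of_mem_peaks σ hj; omega
    exact iff_of_false (lt_of_add_one_mem_peaks σ hadj (hpj ▸ hj)).not_gt
      (hpj ▸ add_one_notMem_peaks σ hj : (p.1 : ℕ) + 1 + 1 ∉ peaks n σ)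

lemma card_adjacentPairs_flankStarts_peaks {n : ℕ} (σ : Equiv.Perm (Fin n)) :
    #(adjacentPairs n (flankStarts (peaks n σ))) = 2 * #(peaks n σ) := by
  rw [card_adjacentPairs, card_flankStarts]
  · exact fun j hj => (two_le_and_lt_of_mem_peaks σ hj).1
  · exact fun j hj => add_one_notMem_peaks σ hj
  · simp only [flankStarts, mem_union, mem_image]
    rintro i (⟨j, hj, rfl⟩ | ⟨j, hj, rfl⟩) <;>
      · have := two_le_and_lt_of_mem_peaks σ hj; omega

theorem kendall_tau_le_on_peak_class_general (n : ℕ) (S : Finset ℕ)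
    (σ ρ : Equiv.Perm (Fin n)) (hσ : peaks n σ = S) (hρ : peaks n ρ = S) :
    dK n σ ρ ≤ n * (n - 1) / 2 - 2 * S.card := by
  subst hσ
  have hbound := dK_add_card_le (σ := σ) (ρ := ρ) _ (fun _ => lt_of_mem_adjacentPairs)
    (fun p hp => (lt_iff_of_mem_adjacentPairs_flankStarts_peaks σ hp).trans
      (hρ ▸ lt_iff_of_mem_adjacentPairs_flankStarts_peaks ρ (hρ ▸ hp)).symm)
  rw [card_adjacentPairs_flankStarts_peaks] at hbound
  omega

/-- upper bound on the Kendall-Tau distance in `P(S;n)`. -/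
theorem kendall_tau_le_on_peak_class (n : ℕ) (hn : 2 ≤ n) (S : Finset ℕ)
    (σ ρ : Equiv.Perm (Fin n)) (hσ : peaks n σ = S) (hρ : peaks n ρ = S) :
    dK n σ ρ ≤ n * (n - 1) / 2 - 2 * S.card :=
  kendall_tau_le_on_peak_class_general n S σ ρ hσ hρ
end

section
/- For n ≥ 2 and any admissible peak set S, there exist σ, ρ ∈ P(S;n) with Kendall-Tau distance exactly n(n−1)/2 − 2|S|; hence the maximum Kendall-Tau distance on P(S;n) is n(n−1)/2 − 2|S|. -/
namespace MaxKT

/-- value function for the witness σ = e[S] (0-based one-line notation) -/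
def fval (S : Finset ℕ) (i : ℕ) : ℕ :=
  if i + 1 ∈ S then i + 1 else if i ∈ S then i - 1 else i

/-- value function for the involution part of the witness ρ = e*[S] -/
def gval (S : Finset ℕ) (i : ℕ) : ℕ :=
  if i + 2 ∈ S then i + 1 else if i + 1 ∈ S then i - 1 else i

variable {n : ℕ} {S : Finset ℕ}

lemma fval_eq1 {i : ℕ} (h : i + 1 ∈ S) : fval S i = i + 1 := if_pos h

lemma fval_eq2 {i : ℕ} (h1 : i + 1 ∉ S) (h2 : i ∈ S) : fval S i = i - 1 := by
  rw [fval, if_neg h1, if_pos h2]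

lemma fval_eq3 {i : ℕ} (h1 : i + 1 ∉ S) (h2 : i ∉ S) : fval S i = i := by
  rw [fval, if_neg h1, if_neg h2]

lemma gval_eq1 {i : ℕ} (h : i + 2 ∈ S) : gval S i = i + 1 := if_pos h

lemma gval_eq2 {i : ℕ} (h1 : i + 2 ∉ S) (h2 : i + 1 ∈ S) : gval S i = i - 1 := by
  rw [gval, if_neg h1, if_pos h2]

lemma gval_eq3 {i : ℕ} (h1 : i + 2 ∉ S) (h2 : i + 1 ∉ S) : gval S i = i := by
  rw [gval, if_neg h1, if_neg h2]

lemma memS_congr {a b : ℕ} (e : a = b) (h : a ∈ S) : b ∈ S := e ▸ h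


section vals
set_option linter.unusedSectionVars false
variable (hb : ∀ k ∈ S, 2 ≤ k ∧ k < n) (hnc : ∀ k ∈ S, k + 1 ∉ S)
include hb hnc

lemma fval_lt {i : ℕ} (hi : i < n) : fval S i < n := by
  unfold fval
  split_ifs with h1 h2
  · exact (hb _ h1).2
  · omega
  · omega

lemma fval_invol (i : ℕ) : fval S (fval S i) = i := by
  by_cases h1 : i + 1 ∈ S
  · have h3 : i + 1 + 1 ∉ S := hnc _ h1
    rw [fval_eq1 h1, fval_eq2 h3 h1]
    omega
  · by_cases h2 : i ∈ S
    · have h3 : 2 ≤ i := (hb _ h2).1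
      have h4 : i - 1 + 1 = i := by omega
      rw [fval_eq2 h1 h2, fval_eq1 (memS_congr h4.symm h2)]
      omega
    · rw [fval_eq3 h1 h2, fval_eq3 h1 h2]

lemma f_desc {k : ℕ} (hk : k ∈ S) : fval S (k - 1) = k ∧ fval S k = k - 1 := by
  have h2 : 2 ≤ k := (hb _ hk).1
  have h3 : k - 1 + 1 = k := by omega
  have h4 : k + 1 ∉ S := hnc _ hk
  constructor
  · rw [fval_eq1 (memS_congr h3.symm hk)]; omega
  · rw [fval_eq2 h4 hk]

lemma f_mono {i j : ℕ} (hij : i < j) (h : ¬(j = i + 1 ∧ j ∈ S)) :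
    fval S i < fval S j := by
  unfold fval
  split_ifs with h1 h2 h3 h4 h5 h6 h7 h8
  · omega
  · -- i+1∈S, j∈S
    have e1 : j ≠ i + 1 := fun e => h ⟨e, h3⟩
    have e2 : j ≠ i + 2 := fun e => (hnc _ h1) (e ▸ h3)
    have := (hb _ h3).1
    omega
  · have e1 : j ≠ i + 1 := by
      intro e; subst e; exact h3 h1
    omega
  · have := (hb _ h4).1; omega
  · have := (hb _ h4).1; have := (hb _ h6).1; omega
  · have := (hb _ h4).1; omega
  · omega
  · have e1 : j ≠ i + 1 := fun e => h ⟨e, h8⟩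
    have := (hb _ h8).1
    omega
  · omega

lemma f_ne {i j : ℕ} (hij : i ≠ j) : fval S i ≠ fval S j := fun e => by
  have := fval_invol hb hnc i
  have := fval_invol hb hnc j
  rw [e] at *; omega

lemma f_desc_iff {i j : ℕ} (hij : i < j) :
    fval S j < fval S i ↔ (j = i + 1 ∧ j ∈ S) := by
  constructor
  · intro hlt
    by_contra hc
    exact absurd (f_mono hb hnc hij hc) (by omega)
  · rintro ⟨rfl, hj⟩
    obtain ⟨e1, e2⟩ := f_desc hb hnc hj
    have : i + 1 - 1 = i := by omega
    rw [this] at e1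
    omega

lemma gval_lt {i : ℕ} (hi : i < n) : gval S i < n := by
  unfold gval
  split_ifs with h1 h2
  · have := (hb _ h1).2; omega
  · omega
  · omega

lemma gval_invol (i : ℕ) : gval S (gval S i) = i := by
  by_cases h1 : i + 2 ∈ S
  · have h3 : i + 1 + 2 ∉ S := fun hc => hnc _ h1 (memS_congr (by omega) hc)
    have h4 : i + 1 + 1 = i + 2 := by omega
    rw [gval_eq1 h1, gval_eq2 h3 (memS_congr h4.symm h1)]
    omega
  · by_cases h2 : i + 1 ∈ S
    · have h3 : 2 ≤ i + 1 := (hb _ h2).1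
      have h4 : i - 1 + 2 = i + 1 := by omega
      rw [gval_eq2 h1 h2, gval_eq1 (memS_congr h4.symm h2)]
      omega
    · rw [gval_eq3 h1 h2, gval_eq3 h1 h2]

lemma g_asc {k : ℕ} (hk : k ∈ S) : gval S (k - 2) = k - 1 ∧ gval S (k - 1) = k - 2 := by
  have h2 : 2 ≤ k := (hb _ hk).1
  have h3 : k - 2 + 2 = k := by omega
  have h4 : k - 1 + 2 = k + 1 := by omega
  have h5 : k - 1 + 1 = k := by omega
  have h6 : k + 1 ∉ S := hnc _ hk
  constructor
  · rw [gval_eq1 (memS_congr h3.symm hk)]; omega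
  · have h7 : k - 1 + 2 ∉ S := fun hc => h6 (memS_congr h4 hc)
    rw [gval_eq2 h7 (memS_congr h5.symm hk)]; omega

lemma g_mono {i j : ℕ} (hij : i < j) (h : ¬(j = i + 1 ∧ j + 1 ∈ S)) :
    gval S i < gval S j := by
  unfold gval
  split_ifs with h1 h2 h3 h4 h5 h6 h7 h8
  · omega
  · have e1 : j ≠ i + 1 := fun e => h ⟨e, h3⟩
    have e2 : j ≠ i + 2 := by
      intro e; subst e; exact hnc _ h1 h3
    have := (hb _ h3).1
    omega
  · have e1 : j ≠ i + 1 := by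
      intro e; subst e
      have e2 : i + 1 + 1 = i + 2 := by omega
      rw [e2] at h3; exact h3 h1
    omega
  · have := (hb _ h4).1; omega
  · have := (hb _ h4).1; have := (hb _ h6).1; omega
  · have := (hb _ h4).1; omega
  · omega
  · have e1 : j ≠ i + 1 := fun e => h ⟨e, h8⟩
    have := (hb _ h8).1
    omega
  · omega

lemma g_ne {i j : ℕ} (hij : i ≠ j) : gval S i ≠ gval S j := fun e => by
  have := gval_invol hb hnc i
  have := gval_invol hb hnc j
  rw [e] at *; omega

lemma g_desc_iff {i j : ℕ} (hij : i < j) :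
    gval S j < gval S i ↔ (j = i + 1 ∧ j + 1 ∈ S) := by
  constructor
  · intro hlt
    by_contra hc
    exact absurd (g_mono hb hnc hij hc) (by omega)
  · rintro ⟨rfl, hj⟩
    obtain ⟨e1, e2⟩ := g_asc hb hnc hj
    have h2 : 2 ≤ i + 1 + 1 := (hb _ hj).1
    have e3 : i + 1 + 1 - 2 = i := by omega
    have e4 : i + 1 + 1 - 1 = i + 1 := by omega
    rw [e3, e4] at e1 e2
    omega

end vals

/-- build a permutation of `Fin n` from an involutive value map -/
def mkPerm (n : ℕ) (v : ℕ → ℕ) (hlt : ∀ i < n, v i < n) (hinv : ∀ i < n, v (v i) = i) :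
    Equiv.Perm (Fin n) where
  toFun i := ⟨v i, hlt i i.2⟩
  invFun i := ⟨v i, hlt i i.2⟩
  left_inv i := Fin.ext (hinv i i.2)
  right_inv i := Fin.ext (hinv i i.2)

section core
set_option linter.unusedSectionVars false
variable {n : ℕ} {S : Finset ℕ}

/-- the set of "good" (concordant) pairs -/
def concSet (n : ℕ) (S : Finset ℕ) : Finset (Fin n × Fin n) :=
  Finset.univ.filter fun p : Fin n × Fin n =>
    (p.1 : ℕ) + 1 = (p.2 : ℕ) ∧ ((p.2 : ℕ) ∈ S ∨ (p.2 : ℕ) + 1 ∈ S)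

lemma card_allpairs (n : ℕ) :
    (Finset.univ.filter (fun p : Fin n × Fin n => p.1 < p.2)).card = n * (n - 1) / 2 := by
  classical
  have h1 : (Finset.univ.filter (fun p : Fin n × Fin n => p.1 < p.2)).card
      = ∑ j : Fin n, (j : ℕ) := by
    rw [Finset.card_eq_sum_card_fiberwise (f := fun p : Fin n × Fin n => p.2)
      (t := Finset.univ) (fun x _ => Finset.mem_univ _)]
    refine Finset.sum_congr rfl fun j _ => ?_
    have he : (Finset.univ.filter (fun p : Fin n × Fin n => p.1 < p.2)).filter
        (fun p => p.2 = j) = (Finset.Iio j) ×ˢ {j} := by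
      ext p
      simp only [Finset.mem_filter, Finset.mem_univ, true_and, Finset.mem_product,
        Finset.mem_Iio, Finset.mem_singleton]
      constructor
      · rintro ⟨h1, h2⟩; exact ⟨h2 ▸ h1, h2⟩
      · rintro ⟨h1, h2⟩; exact ⟨h2 ▸ h1, h2⟩
    rw [he, Finset.card_product, Finset.card_singleton, Fin.card_Iio, mul_one]
  rw [h1, Fin.sum_univ_eq_sum_range (fun i => i) n, Finset.sum_range_id]

lemma concSet_card (hb : ∀ k ∈ S, 2 ≤ k ∧ k < n) (hnc : ∀ k ∈ S, k + 1 ∉ S) :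
    (concSet n S).card = 2 * S.card := by
  classical
  set T : Finset ℕ := S ∪ S.image (fun k => k - 1) with hT
  have hcard : (concSet n S).card = T.card := by
    refine Finset.card_bij (fun p _ => ((p.2 : Fin n) : ℕ)) ?_ ?_ ?_
    · rintro p hp
      obtain ⟨-, he, hor⟩ := Finset.mem_filter.1 hp
      rcases hor with h | h
      · exact Finset.mem_union_left _ h
      · exact Finset.mem_union_right _ (Finset.mem_image.2 ⟨(p.2 : ℕ) + 1, h, by simp⟩)
    · rintro p hp q hq he
      obtain ⟨-, he1, -⟩ := Finset.mem_filter.1 hp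
      obtain ⟨-, he2, -⟩ := Finset.mem_filter.1 hq
      refine Prod.ext (Fin.ext ?_) (Fin.ext he)
      omega
    · rintro j hj
      have hj' : (j ∈ S ∨ j + 1 ∈ S) ∧ 1 ≤ j ∧ j < n := by
        rcases Finset.mem_union.1 hj with h | h
        · obtain ⟨e1, e2⟩ := hb j h
          exact ⟨Or.inl h, by omega, e2⟩
        · obtain ⟨k, hk, hkj⟩ := Finset.mem_image.1 h
          obtain ⟨e1, e2⟩ := hb k hk
          exact ⟨Or.inr (memS_congr (by omega) hk), by omega, by omega⟩
      obtain ⟨hor, h1, h2⟩ := hj'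
      refine ⟨(⟨j - 1, by omega⟩, ⟨j, h2⟩), ?_, rfl⟩
      refine Finset.mem_filter.2 ⟨Finset.mem_univ _, ?_, ?_⟩
      · show j - 1 + 1 = j; omega
      · exact hor
  have hdisj : Disjoint S (S.image (fun k => k - 1)) := by
    rw [Finset.disjoint_left]
    intro a ha hb'
    obtain ⟨k, hk, hka⟩ := Finset.mem_image.1 hb'
    have h2 : 2 ≤ k := (hb k hk).1
    exact hnc a ha (memS_congr (by omega) hk)
  have himg : (S.image (fun k => k - 1)).card = S.card := by
    refine Finset.card_image_of_injOn ?_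
    intro a ha b hb' he
    have := (hb a ha).1
    have := (hb b hb').1
    simp only at he
    omega
  rw [hcard, hT, Finset.card_union_of_disjoint hdisj, himg]
  omega

lemma peaks_eq_of_fval (hb : ∀ k ∈ S, 2 ≤ k ∧ k < n) (hnc : ∀ k ∈ S, k + 1 ∉ S)
    (σ : Equiv.Perm (Fin n)) (hσ : ∀ i : Fin n, (σ i : ℕ) = fval S (i : ℕ)) :
    peaks n σ = S := by
  ext j
  simp only [peaks, Finset.mem_filter, Finset.mem_Icc]
  constructor
  · rintro ⟨⟨hj2, hjn⟩, h1, h2, h3, ha, hd⟩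
    have hd' : fval S j < fval S (j - 1) := by
      have h := Fin.lt_def.1 hd
      rw [hσ, hσ] at h
      exact h
    exact ((f_desc_iff hb hnc (show j - 1 < j by omega)).1 hd').2
  · intro hj
    obtain ⟨hj2, hjn⟩ := hb j hj
    refine ⟨⟨hj2, by omega⟩, by omega, by omega, hjn, ?_, ?_⟩
    · rw [Fin.lt_def, hσ, hσ]
      show fval S (j - 2) < fval S (j - 1)
      refine f_mono hb hnc (by omega) ?_
      rintro ⟨-, hmem⟩
      exact hnc _ hmem (memS_congr (by omega) hj)
    · rw [Fin.lt_def, hσ, hσ]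
      obtain ⟨e1, e2⟩ := f_desc hb hnc hj
      show fval S j < fval S (j - 1)
      omega

lemma peaks_eq_of_gval (hb : ∀ k ∈ S, 2 ≤ k ∧ k < n) (hnc : ∀ k ∈ S, k + 1 ∉ S)
    (ρ : Equiv.Perm (Fin n)) (hρ : ∀ i : Fin n, (ρ i : ℕ) = n - 1 - gval S (i : ℕ)) :
    peaks n ρ = S := by
  ext j
  simp only [peaks, Finset.mem_filter, Finset.mem_Icc]
  constructor
  · rintro ⟨⟨hj2, hjn⟩, h1, h2, h3, ha, hd⟩
    have haa : n - 1 - gval S (j - 2) < n - 1 - gval S (j - 1) := by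
      have h := Fin.lt_def.1 ha
      rw [hρ, hρ] at h
      exact h
    have hg1 : gval S (j - 2) < n := gval_lt hb hnc (show j - 2 < n by omega)
    have hg2 : gval S (j - 1) < n := gval_lt hb hnc (show j - 1 < n by omega)
    have ha' : gval S (j - 1) < gval S (j - 2) := by omega
    exact memS_congr (by omega)
      ((g_desc_iff hb hnc (show j - 2 < j - 1 by omega)).1 ha').2
  · intro hj
    obtain ⟨hj2, hjn⟩ := hb j hj
    refine ⟨⟨hj2, by omega⟩, by omega, by omega, by omega, ?_, ?_⟩
    · rw [Fin.lt_def, hρ, hρ]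
      show n - 1 - gval S (j - 2) < n - 1 - gval S (j - 1)
      obtain ⟨e1, e2⟩ := g_asc hb hnc hj
      have hg1 : gval S (j - 2) < n := gval_lt hb hnc (show j - 2 < n by omega)
      have hg2 : gval S (j - 1) < n := gval_lt hb hnc (show j - 1 < n by omega)
      omega
    · rw [Fin.lt_def, hρ, hρ]
      show n - 1 - gval S j < n - 1 - gval S (j - 1)
      have hgt : gval S (j - 1) < gval S j := by
        refine g_mono hb hnc (by omega) ?_
        rintro ⟨-, hmem⟩
        exact hnc _ hj hmem
      have hg1 : gval S j < n := gval_lt hb hnc (show j < n by omega)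
      have hg2 : gval S (j - 1) < n := gval_lt hb hnc (show j - 1 < n by omega)
      omega

lemma dKset_subset (σ ρ : Equiv.Perm (Fin n))
    (hpσ : peaks n σ = S) (hpρ : peaks n ρ = S) :
    (Finset.univ.filter (fun p : Fin n × Fin n =>
      p.1 < p.2 ∧ (((σ p.1 : ℕ) : ℤ) - ((σ p.2 : ℕ) : ℤ)) *
        (((ρ p.1 : ℕ) : ℤ) - ((ρ p.2 : ℕ) : ℤ)) < 0))
      ⊆ (Finset.univ.filter (fun p : Fin n × Fin n => p.1 < p.2)) \ concSet n S := by
  classical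
  intro p hp
  obtain ⟨-, hlt, hneg⟩ := Finset.mem_filter.1 hp
  rw [Finset.mem_sdiff]
  refine ⟨Finset.mem_filter.2 ⟨Finset.mem_univ _, hlt⟩, ?_⟩
  intro hc
  obtain ⟨-, he, hor⟩ := Finset.mem_filter.1 hc
  -- for each peak position k of a permutation τ with peaks = S we get sign facts
  have mono : ∀ (τ : Equiv.Perm (Fin n)), peaks n τ = S →
      0 < (((τ p.1 : ℕ) : ℤ) - ((τ p.2 : ℕ) : ℤ)) ∨
      ((((τ p.1 : ℕ) : ℤ) - ((τ p.2 : ℕ) : ℤ)) < 0) := by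
    intro τ hτ
    rcases hor with h | h
    · -- (p.2 : ℕ) ∈ S ; the pair is a descent of τ
      have hpk : (p.2 : ℕ) ∈ peaks n τ := hτ.symm ▸ h
      obtain ⟨-, h1, h2, h3, ha, hd⟩ := Finset.mem_filter.1 hpk
      have e1 : (⟨(p.2 : ℕ) - 1, h2⟩ : Fin n) = p.1 := Fin.ext (show (p.2 : ℕ) - 1 = (p.1 : ℕ) by omega)
      have e2 : (⟨(p.2 : ℕ), h3⟩ : Fin n) = p.2 := Fin.ext rfl
      rw [e1, e2] at hd
      left
      have := Fin.lt_def.1 hd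
      omega
    · -- (p.2 : ℕ) + 1 ∈ S ; the pair is an ascent of τ
      have hpk : (p.2 : ℕ) + 1 ∈ peaks n τ := hτ.symm ▸ h
      obtain ⟨-, h1, h2, h3, ha, hd⟩ := Finset.mem_filter.1 hpk
      have e1 : (⟨(p.2 : ℕ) + 1 - 2, h1⟩ : Fin n) = p.1 := Fin.ext (show (p.2 : ℕ) + 1 - 2 = (p.1 : ℕ) by omega)
      have e2 : (⟨(p.2 : ℕ) + 1 - 1, h2⟩ : Fin n) = p.2 := Fin.ext (show (p.2 : ℕ) + 1 - 1 = (p.2 : ℕ) by omega)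
      rw [e1, e2] at ha
      right
      have := Fin.lt_def.1 ha
      omega
  rcases mono σ hpσ with h1 | h1 <;> rcases mono ρ hpρ with h2 | h2
  · exact absurd hneg (not_lt.2 (le_of_lt (mul_pos h1 h2)))
  · -- σ descent, ρ ascent: impossible since both come from the same case of hor
    rcases hor with h | h
    · have hpk : (p.2 : ℕ) ∈ peaks n ρ := hpρ.symm ▸ h
      obtain ⟨-, hh1, hh2, hh3, ha, hd⟩ := Finset.mem_filter.1 hpk
      have e1 : (⟨(p.2 : ℕ) - 1, hh2⟩ : Fin n) = p.1 := Fin.ext (show (p.2 : ℕ) - 1 = (p.1 : ℕ) by omega)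
      have e2 : (⟨(p.2 : ℕ), hh3⟩ : Fin n) = p.2 := Fin.ext rfl
      rw [e1, e2] at hd
      have := Fin.lt_def.1 hd
      omega
    · have hpk : (p.2 : ℕ) + 1 ∈ peaks n σ := hpσ.symm ▸ h
      obtain ⟨-, hh1, hh2, hh3, ha, hd⟩ := Finset.mem_filter.1 hpk
      have e1 : (⟨(p.2 : ℕ) + 1 - 2, hh1⟩ : Fin n) = p.1 := Fin.ext (show (p.2 : ℕ) + 1 - 2 = (p.1 : ℕ) by omega)
      have e2 : (⟨(p.2 : ℕ) + 1 - 1, hh2⟩ : Fin n) = p.2 := Fin.ext (show (p.2 : ℕ) + 1 - 1 = (p.2 : ℕ) by omega)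
      rw [e1, e2] at ha
      have := Fin.lt_def.1 ha
      omega
  · rcases hor with h | h
    · have hpk : (p.2 : ℕ) ∈ peaks n σ := hpσ.symm ▸ h
      obtain ⟨-, hh1, hh2, hh3, ha, hd⟩ := Finset.mem_filter.1 hpk
      have e1 : (⟨(p.2 : ℕ) - 1, hh2⟩ : Fin n) = p.1 := Fin.ext (show (p.2 : ℕ) - 1 = (p.1 : ℕ) by omega)
      have e2 : (⟨(p.2 : ℕ), hh3⟩ : Fin n) = p.2 := Fin.ext rfl
      rw [e1, e2] at hd
      have := Fin.lt_def.1 hd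
      omega
    · have hpk : (p.2 : ℕ) + 1 ∈ peaks n ρ := hpρ.symm ▸ h
      obtain ⟨-, hh1, hh2, hh3, ha, hd⟩ := Finset.mem_filter.1 hpk
      have e1 : (⟨(p.2 : ℕ) + 1 - 2, hh1⟩ : Fin n) = p.1 := Fin.ext (show (p.2 : ℕ) + 1 - 2 = (p.1 : ℕ) by omega)
      have e2 : (⟨(p.2 : ℕ) + 1 - 1, hh2⟩ : Fin n) = p.2 := Fin.ext (show (p.2 : ℕ) + 1 - 1 = (p.2 : ℕ) by omega)
      rw [e1, e2] at ha
      have := Fin.lt_def.1 ha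
      omega
  · exact absurd hneg (not_lt.2 (le_of_lt (mul_pos_of_neg_of_neg h1 h2)))

end core
section final
set_option linter.unusedSectionVars false
variable {n : ℕ} {S : Finset ℕ}

lemma dKset_eq (hb : ∀ k ∈ S, 2 ≤ k ∧ k < n) (hnc : ∀ k ∈ S, k + 1 ∉ S)
    (σ ρ : Equiv.Perm (Fin n))
    (hσ : ∀ i : Fin n, (σ i : ℕ) = fval S (i : ℕ))
    (hρ : ∀ i : Fin n, (ρ i : ℕ) = n - 1 - gval S (i : ℕ)) :
    (Finset.univ.filter (fun p : Fin n × Fin n =>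
      p.1 < p.2 ∧ (((σ p.1 : ℕ) : ℤ) - ((σ p.2 : ℕ) : ℤ)) *
        (((ρ p.1 : ℕ) : ℤ) - ((ρ p.2 : ℕ) : ℤ)) < 0))
      = (Finset.univ.filter (fun p : Fin n × Fin n => p.1 < p.2)) \ concSet n S := by
  classical
  refine Finset.Subset.antisymm
    (dKset_subset σ ρ (peaks_eq_of_fval hb hnc σ hσ) (peaks_eq_of_gval hb hnc ρ hρ)) ?_
  intro p hp
  rw [Finset.mem_sdiff] at hp
  obtain ⟨hp1, hp2⟩ := hp
  have hlt : p.1 < p.2 := (Finset.mem_filter.1 hp1).2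
  have hltn : (p.1 : ℕ) < (p.2 : ℕ) := Fin.lt_def.1 hlt
  have hC : ¬((p.1 : ℕ) + 1 = (p.2 : ℕ) ∧ ((p.2 : ℕ) ∈ S ∨ (p.2 : ℕ) + 1 ∈ S)) := by
    intro h; exact hp2 (Finset.mem_filter.2 ⟨Finset.mem_univ _, h⟩)
  have hf : fval S (p.1 : ℕ) < fval S (p.2 : ℕ) := by
    refine f_mono hb hnc hltn ?_
    rintro ⟨e, hm⟩
    exact hC ⟨by omega, Or.inl hm⟩
  have hg : gval S (p.1 : ℕ) < gval S (p.2 : ℕ) := by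
    refine g_mono hb hnc hltn ?_
    rintro ⟨e, hm⟩
    exact hC ⟨by omega, Or.inr hm⟩
  have hg1 : gval S (p.1 : ℕ) < n := gval_lt hb hnc p.1.2
  have hg2 : gval S (p.2 : ℕ) < n := gval_lt hb hnc p.2.2
  refine Finset.mem_filter.2 ⟨Finset.mem_univ _, hlt, ?_⟩
  have d1 : (((σ p.1 : ℕ) : ℤ) - ((σ p.2 : ℕ) : ℤ)) < 0 := by
    rw [hσ, hσ]; omega
  have d2 : 0 < (((ρ p.1 : ℕ) : ℤ) - ((ρ p.2 : ℕ) : ℤ)) := by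
    rw [hρ, hρ]; omega
  exact mul_neg_of_neg_of_pos d1 d2

lemma core (hn : 2 ≤ n) (hb : ∀ k ∈ S, 2 ≤ k ∧ k < n) (hnc : ∀ k ∈ S, k + 1 ∉ S) :
    IsGreatest {d | ∃ σ ρ : Equiv.Perm (Fin n),
        peaks n σ = S ∧ peaks n ρ = S ∧ d = dK n σ ρ}
      (n * (n - 1) / 2 - 2 * S.card) := by
  classical
  have hflt : ∀ i < n, fval S i < n := fun i hi => fval_lt hb hnc hi
  have hfinv : ∀ i < n, fval S (fval S i) = i := fun i _ => fval_invol hb hnc i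
  set σw := mkPerm n (fval S) hflt hfinv with hσw
  have hglt : ∀ i < n, gval S i < n := fun i hi => gval_lt hb hnc hi
  have hginv : ∀ i < n, gval S (gval S i) = i := fun i _ => gval_invol hb hnc i
  set gw := mkPerm n (gval S) hglt hginv with hgw
  have hrlt : ∀ i < n, n - 1 - i < n := fun i hi => by omega
  have hrinv : ∀ i < n, n - 1 - (n - 1 - i) = i := fun i hi => by omega
  set rw' := mkPerm n (fun i => n - 1 - i) hrlt hrinv with hrw
  set ρw := gw.trans rw' with hρw
  have hσv : ∀ i : Fin n, (σw i : ℕ) = fval S (i : ℕ) := fun i => rfl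
  have hρv : ∀ i : Fin n, (ρw i : ℕ) = n - 1 - gval S (i : ℕ) := fun i => rfl
  have hpσ := peaks_eq_of_fval hb hnc σw hσv
  have hpρ := peaks_eq_of_gval hb hnc ρw hρv
  have hCsub : concSet n S ⊆ Finset.univ.filter (fun p : Fin n × Fin n => p.1 < p.2) := by
    intro p hp
    obtain ⟨-, he, -⟩ := Finset.mem_filter.1 hp
    exact Finset.mem_filter.2 ⟨Finset.mem_univ _, Fin.lt_def.2 (by omega)⟩
  have hdK : dK n σw ρw = n * (n - 1) / 2 - 2 * S.card := by
    unfold dK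
    rw [dKset_eq hb hnc σw ρw hσv hρv, Finset.card_sdiff_of_subset hCsub, card_allpairs,
      concSet_card hb hnc]
  constructor
  · exact ⟨σw, ρw, hpσ, hpρ, hdK.symm⟩
  · rintro d ⟨σ, ρ, h1, h2, rfl⟩
    have hsub := dKset_subset σ ρ h1 h2
    calc dK n σ ρ
        ≤ ((Finset.univ.filter (fun p : Fin n × Fin n => p.1 < p.2)) \ concSet n S).card :=
          Finset.card_le_card hsub
      _ = n * (n - 1) / 2 - 2 * S.card := by
          rw [Finset.card_sdiff_of_subset hCsub, card_allpairs, concSet_card hb hnc]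

end final

end MaxKT

/-- the maximum Kendall-Tau distance on `P(S;n)` is
`n(n-1)/2 - 2|S|`. -/
theorem max_kendall_tau_on_peak_class (n : ℕ) (hn : 2 ≤ n) (S : Finset ℕ)
    (hS : ∃ σ : Equiv.Perm (Fin n), peaks n σ = S) :
    IsGreatest {d | ∃ σ ρ : Equiv.Perm (Fin n),
        peaks n σ = S ∧ peaks n ρ = S ∧ d = dK n σ ρ}
      (n * (n - 1) / 2 - 2 * S.card) := by
  obtain ⟨σ₀, hσ₀⟩ := hS
  have hb : ∀ k ∈ S, 2 ≤ k ∧ k < n := by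
    intro k hk
    rw [← hσ₀] at hk
    simp only [peaks, Finset.mem_filter, Finset.mem_Icc] at hk
    omega
  have hnc : ∀ k ∈ S, k + 1 ∉ S := by
    intro k hk hk1
    obtain ⟨h2k, hkn⟩ := hb k hk
    rw [← hσ₀] at hk hk1
    simp only [peaks, Finset.mem_filter, Finset.mem_Icc] at hk hk1
    obtain ⟨-, h1, h2, h3, ha, hd⟩ := hk
    obtain ⟨-, g1, g2, g3, ga, gd⟩ := hk1
    have e1 : (⟨k + 1 - 2, g1⟩ : Fin n) = ⟨k - 1, h2⟩ := Fin.ext (show k + 1 - 2 = k - 1 by omega)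
    have e2 : (⟨k + 1 - 1, g2⟩ : Fin n) = ⟨k, h3⟩ := Fin.ext (show k + 1 - 1 = k by omega)
    rw [e1, e2] at ga
    exact absurd hd (not_lt.2 (le_of_lt ga))
  exact MaxKT.core hn hb hnc
end

section
/- Let n ≥ 2 and S be an admissible peak set containing both 2 and n−1. Then for any σ, ρ ∈ P(S;n), the ℓ∞ distance satisfies d_ℓ(σ,ρ) ≤ n−2, and this bound is attained; i.e., the maximum ℓ∞ distance on P(S;n) is n−2. -/
/-!
If the peak set contains `2` and `n - 1`, the largest value `n - 1` cannot sit at either end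
(both ends are neighbours of peaks), so it sits at a peak, while the smallest value `0` never
does. Hence two permutations with this peak set never put `n - 1` and `0` at the same position,
and all entries differ by at most `n - 2`. For attainment, relabel the values of a member `τ`
without changing any ascent or descent: moving `τ 0 < τ 1` down to `0` gives one permutation,
moving `τ 1` to the top and then `τ 0` just below it gives the other.
-/

open Equiv SimpleGraph

/-- Positions are 0-based here: `IsPeakAt σ p` corresponds to `(p : ℕ) + 1 ∈ peaks n σ`. -/
def IsPeakAt {n : ℕ} (σ : Perm (Fin n)) (p : Fin n) : Prop :=
  0 < (p : ℕ) ∧ (p : ℕ) + 1 < n ∧ ∀ q, (pathGraph n).Adj p q → σ q < σ p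

theorem mem_peaks_iff {n j : ℕ} {σ : Perm (Fin n)} :
    j ∈ peaks n σ ↔ ∃ p : Fin n, IsPeakAt σ p ∧ (p : ℕ) + 1 = j := by
  simp only [peaks, Finset.mem_filter, Finset.mem_Icc, IsPeakAt, pathGraph_adj]
  constructor
  · rintro ⟨⟨hj2, hjn⟩, h1, h2, h3, hl, hr⟩
    refine ⟨⟨j - 1, h2⟩, ⟨by simp only; omega, by simp only; omega, ?_⟩, by simp only; omega⟩
    rintro ⟨q, hq⟩ (h | h)
    · convert hr using 2; simp only at h; simp only [Fin.mk.injEq]; omega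
    · convert hl using 2; simp only at h; simp only [Fin.mk.injEq]; omega
  · rintro ⟨p, ⟨hp0, hpn, hnb⟩, rfl⟩
    have hmid : ∀ h, σ ⟨(p : ℕ) + 1 - 1, h⟩ = σ p := fun _ => by simp
    refine ⟨⟨by omega, by omega⟩, by omega, by omega, by omega, ?_, ?_⟩ <;> rw [hmid] <;>
      exact hnb _ (by dsimp only; omega)

theorem peaks_eq_of_lt_iff {n : ℕ} {σ τ : Perm (Fin n)}
    (h : ∀ p q, (pathGraph n).Adj p q → (σ q < σ p ↔ τ q < τ p)) :
    peaks n σ = peaks n τ := by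
  ext j
  simp only [mem_peaks_iff, IsPeakAt]
  refine exists_congr fun p => and_congr_left fun _ => and_congr_right fun _ =>
    and_congr_right fun _ => forall_congr' fun q => imp_congr_right fun hq => h p q hq

theorem IsPeakAt.val_apply_pos {n : ℕ} {σ : Perm (Fin n)} {p : Fin n} (h : IsPeakAt σ p) :
    0 < (σ p : ℕ) := by
  have hlt := h.2.2 ⟨p - 1, by omega⟩ (pathGraph_adj.2 (Or.inr (by simp only; have := h.1; omega)))
  exact lt_of_le_of_lt (Nat.zero_le _) hlt

theorem IsPeakAt.val_apply_lt_of_adj {n : ℕ} {σ : Perm (Fin n)} {p q : Fin n} (h : IsPeakAt σ p)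
    (hq : (pathGraph n).Adj p q) : (σ q : ℕ) < n - 1 := by
  have := h.2.2 q hq
  have := (σ p).isLt
  rw [Fin.lt_def] at *
  omega

theorem isPeakAt_of_val_apply_eq {n : ℕ} {σ : Perm (Fin n)} {p : Fin n} (hp0 : 0 < (p : ℕ))
    (hpn : (p : ℕ) + 1 < n) (h : (σ p : ℕ) = n - 1) : IsPeakAt σ p := by
  refine ⟨hp0, hpn, fun q hq => ?_⟩
  have hne : (σ q : ℕ) ≠ σ p := fun e => hq.ne (σ.injective (Fin.ext e)).symm
  have := (σ q).isLt
  rw [Fin.lt_def]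
  omega

theorem mem_peaks_of_val_apply_eq {n : ℕ} {σ : Perm (Fin n)} {p : Fin n}
    (h2 : 2 ∈ peaks n σ) (hn1 : n - 1 ∈ peaks n σ) (h : (σ p : ℕ) = n - 1) :
    (p : ℕ) + 1 ∈ peaks n σ := by
  obtain ⟨l, hl, hl1⟩ := mem_peaks_iff.1 h2
  obtain ⟨r, hr, hr1⟩ := mem_peaks_iff.1 hn1
  have hp0 : 0 < (p : ℕ) := by
    by_contra hp
    have := hl.val_apply_lt_of_adj (q := p) (pathGraph_adj.2 (Or.inr (by omega)))
    omega
  have hpn : (p : ℕ) + 1 < n := by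
    by_contra hp
    have := hr.val_apply_lt_of_adj (q := p) (pathGraph_adj.2 (Or.inl (by have := p.isLt; omega)))
    omega
  exact mem_peaks_iff.2 ⟨p, isPeakAt_of_val_apply_eq hp0 hpn h, rfl⟩

theorem not_mem_peaks_of_val_apply_eq_zero {n : ℕ} {σ : Perm (Fin n)} {p : Fin n}
    (h : (σ p : ℕ) = 0) : (p : ℕ) + 1 ∉ peaks n σ := by
  rintro hmem
  obtain ⟨q, hq, hqp⟩ := mem_peaks_iff.1 hmem
  obtain rfl : q = p := Fin.ext (by omega)
  exact hq.val_apply_pos.ne' h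

theorem dL_le_of_peaks_eq {n : ℕ} {σ ρ : Perm (Fin n)} (h2 : 2 ∈ peaks n σ)
    (hn1 : n - 1 ∈ peaks n σ) (h : peaks n σ = peaks n ρ) : dL n σ ρ ≤ n - 2 := by
  refine Finset.sup_le fun p _ => ?_
  have := (σ p).isLt
  have := (ρ p).isLt
  by_contra hlt
  obtain ⟨hmax, hmin⟩ | ⟨hmin, hmax⟩ :
      ((σ p : ℕ) = n - 1 ∧ (ρ p : ℕ) = 0) ∨ ((σ p : ℕ) = 0 ∧ (ρ p : ℕ) = n - 1) := by omega
  · exact not_mem_peaks_of_val_apply_eq_zero hmin (h ▸ mem_peaks_of_val_apply_eq h2 hn1 hmax)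
  · exact not_mem_peaks_of_val_apply_eq_zero hmin
      (h ▸ mem_peaks_of_val_apply_eq (h ▸ h2) (h ▸ hn1) hmax)

/-- The relabelling of values that moves `x` to `y` and keeps the relative order of all other
values. -/
def moveVal {m : ℕ} (x y : Fin (m + 1)) : Perm (Fin (m + 1)) :=
  (finSuccEquiv' x).trans (finSuccEquiv' y).symm

section moveVal

variable {m : ℕ}

@[simp]
theorem moveVal_apply_self (x y : Fin (m + 1)) : moveVal x y x = y := by
  simp [moveVal]

@[simp]
theorem moveVal_apply_succAbove (x y : Fin (m + 1)) (k : Fin m) :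
    moveVal x y (x.succAbove k) = y.succAbove k := by
  simp [moveVal]

theorem moveVal_lt_moveVal_iff {x y z w : Fin (m + 1)} (hz : z ≠ x) (hw : w ≠ x) :
    moveVal x y z < moveVal x y w ↔ z < w := by
  obtain ⟨k, rfl⟩ := Fin.exists_succAbove_eq hz
  obtain ⟨l, rfl⟩ := Fin.exists_succAbove_eq hw
  simp only [moveVal_apply_succAbove, Fin.succAbove_lt_succAbove_iff]

theorem moveVal_last {x y : Fin (m + 2)} (hx : x ≠ Fin.last _) (hy : y ≠ Fin.last _) :
    moveVal x y (Fin.last _) = Fin.last _ := by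
  conv_lhs => rw [← Fin.succAbove_ne_last_last hx]
  rw [moveVal_apply_succAbove, Fin.succAbove_ne_last_last hy]

theorem peaks_moveVal_mul (τ : Perm (Fin (m + 1))) (x y : Fin (m + 1))
    (h : ∀ p q, (pathGraph (m + 1)).Adj p q → τ p = x → (τ q < x ↔ moveVal x y (τ q) < y)) :
    peaks (m + 1) (moveVal x y * τ) = peaks (m + 1) τ := by
  refine peaks_eq_of_lt_iff fun p q hpq => ?_
  simp only [Perm.mul_apply]
  by_cases hp : τ p = x
  · rw [hp, moveVal_apply_self]
    exact (h p q hpq hp).symm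
  by_cases hq : τ q = x
  · have hpy : moveVal x y (τ p) ≠ y := by
      simpa using (moveVal x y).injective.ne hp
    rw [hq, moveVal_apply_self, lt_iff_le_and_ne, lt_iff_le_and_ne, ← not_lt, ← not_lt,
      ← h q p hpq.symm hq]
    exact and_congr_right fun _ => ⟨fun _ => Ne.symm hp, fun _ => Ne.symm hpy⟩
  · exact moveVal_lt_moveVal_iff hq hp

end moveVal

section attain

variable {m : ℕ}

theorem eq_one_of_pathGraph_adj_zero {q : Fin (m + 2)} (h : (pathGraph (m + 2)).Adj 0 q) :
    q = 1 := by
  rw [pathGraph_adj] at h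
  ext
  simp only [Fin.val_zero, Fin.val_one] at h ⊢
  omega

theorem exists_peaks_eq_apply_zero_eq_zero (τ : Perm (Fin (m + 2))) (h : IsPeakAt τ 1) :
    ∃ σ : Perm (Fin (m + 2)), peaks (m + 2) σ = peaks (m + 2) τ ∧ σ 0 = 0 := by
  refine ⟨moveVal (τ 0) 0 * τ, peaks_moveVal_mul τ _ _ fun p q hpq hp => ?_, by simp⟩
  obtain rfl : p = 0 := τ.injective hp
  obtain rfl := eq_one_of_pathGraph_adj_zero hpq
  simp only [Fin.not_lt_zero, iff_false, not_lt]
  exact (h.2.2 0 hpq.symm).le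

theorem exists_peaks_eq_apply_zero_eq_castSucc_last (τ : Perm (Fin (m + 2))) (h : IsPeakAt τ 1) :
    ∃ ρ : Perm (Fin (m + 2)), peaks (m + 2) ρ = peaks (m + 2) τ ∧ ρ 0 = (Fin.last m).castSucc := by
  set τ' := moveVal (τ 1) (Fin.last _) * τ
  have hτ' : peaks (m + 2) τ' = peaks (m + 2) τ := by
    refine peaks_moveVal_mul τ _ _ fun p q hpq hp => ?_
    obtain rfl : p = 1 := τ.injective hp
    refine iff_of_true (h.2.2 q hpq) (Fin.lt_last_iff_ne_last.2 ?_)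
    simpa using (moveVal (τ 1) (Fin.last _)).injective.ne (τ.injective.ne hpq.ne.symm)
  have hτ'1 : τ' 1 = Fin.last _ := by simp [τ']
  have hτ'0 : τ' 0 ≠ Fin.last _ := hτ'1 ▸ τ'.injective.ne zero_ne_one
  refine ⟨moveVal (τ' 0) (Fin.last m).castSucc * τ', ?_, by simp⟩
  rw [← hτ']
  refine peaks_moveVal_mul τ' _ _ fun p q hpq hp => ?_
  obtain rfl : p = 0 := τ'.injective hp
  obtain rfl := eq_one_of_pathGraph_adj_zero hpq
  rw [hτ'1, moveVal_last hτ'0 (Fin.castSucc_ne_last _)]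
  exact iff_of_false (not_lt.2 (Fin.le_last _)) (not_lt.2 (Fin.le_last _))

end attain

theorem max_linf_on_peak_class_ends_general (n : ℕ) (S : Finset ℕ)
    (hS : ∃ σ : Equiv.Perm (Fin n), peaks n σ = S)
    (h2 : 2 ∈ S) (hn1 : n - 1 ∈ S) :
    IsGreatest {d | ∃ σ ρ : Equiv.Perm (Fin n),
        peaks n σ = S ∧ peaks n ρ = S ∧ d = dL n σ ρ} (n - 2) := by
  obtain ⟨τ, rfl⟩ := hS
  refine ⟨?_, fun d ⟨σ, ρ, hσ, hρ, hd⟩ =>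
    hd ▸ dL_le_of_peaks_eq (hσ ▸ h2) (hσ ▸ hn1) (hσ.trans hρ.symm)⟩
  obtain ⟨p, hp, hp2⟩ := mem_peaks_iff.1 h2
  obtain ⟨m, rfl⟩ : ∃ m, n = m + 2 := ⟨n - 2, by have := hp.2.1; omega⟩
  obtain rfl : p = 1 := Fin.ext (by simp only [Fin.val_one]; omega)
  obtain ⟨σ, hσ, hσ0⟩ := exists_peaks_eq_apply_zero_eq_zero τ hp
  obtain ⟨ρ, hρ, hρ0⟩ := exists_peaks_eq_apply_zero_eq_castSucc_last τ hp
  refine ⟨σ, ρ, hσ, hρ, le_antisymm ?_ (dL_le_of_peaks_eq (hσ ▸ h2) (hσ ▸ hn1) (hσ.trans hρ.symm))⟩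
  calc m + 2 - 2 = ((((σ 0 : ℕ) : ℤ) - ((ρ 0 : ℕ) : ℤ))).natAbs := by simp [hσ0, hρ0]
    _ ≤ dL (m + 2) σ ρ := Finset.le_sup (f := fun i => (((σ i : ℕ) : ℤ) - ((ρ i : ℕ) : ℤ)).natAbs)
        (Finset.mem_univ _)

/-- if `2 ∈ S` and `n-1 ∈ S`, the maximum ℓ∞ distance on
`P(S;n)` is `n - 2`. -/
theorem max_linf_on_peak_class_ends (n : ℕ) (hn : 2 ≤ n) (S : Finset ℕ)
    (hS : ∃ σ : Equiv.Perm (Fin n), peaks n σ = S)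
    (h2 : 2 ∈ S) (hn1 : n - 1 ∈ S) :
    IsGreatest {d | ∃ σ ρ : Equiv.Perm (Fin n),
        peaks n σ = S ∧ peaks n ρ = S ∧ d = dL n σ ρ} (n - 2) :=
  max_linf_on_peak_class_ends_general n S hS h2 hn1
end

section
/- Let n ≥ 2 and S be an admissible peak set such that 2 ∉ S or n−1 ∉ S. Then the maximum ℓ∞ distance between permutations in P(S;n) is n−1. -/
/-! Every peak set is admissible: it lies in `[2, n - 1]` and contains no two consecutive
integers. Conversely, an admissible `S` is the peak set both of `e[S]`, the identity with the
positions `j, j + 1` exchanged for each `j ∈ S`, and of `e*[S]`, the reversal with the positions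
`j - 1, j` exchanged (positions 1-based). If `2 ∉ S` these take the values `1` and `n` at
position `1`; if `n - 1 ∉ S`, the values `n` and `1` at position `n`. So their ℓ∞ distance is
`n - 1`, which no two permutations of `[n]` exceed. -/

section AdjacentSwaps

variable {n : ℕ} (p : ℕ → Prop) [DecidablePred p]

def adjSwapsFun (hlt : ∀ k, p k → k + 1 < n) (i : Fin n) : Fin n :=
  if h : p i then ⟨i + 1, hlt i h⟩
  else if 0 < (i : ℕ) ∧ p (i - 1) then ⟨i - 1, by omega⟩ else i

lemma adjSwapsFun_val (hlt : ∀ k, p k → k + 1 < n) (i : Fin n) :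
    (adjSwapsFun p hlt i : ℕ) =
      if p i then (i : ℕ) + 1 else if 0 < (i : ℕ) ∧ p (i - 1) then (i : ℕ) - 1 else i := by
  unfold adjSwapsFun; split_ifs <;> rfl

lemma adjSwapsFun_involutive (hlt : ∀ k, p k → k + 1 < n) (hadj : ∀ k, p k → ¬p (k + 1)) :
    Function.Involutive (adjSwapsFun p hlt) := by
  intro i
  ext
  by_cases hi : p i
  · simp [adjSwapsFun_val, hi, hadj i hi]
  · by_cases hi' : 0 < (i : ℕ) ∧ p (i - 1)
    · have hsucc : (i : ℕ) - 1 + 1 = i := by omega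
      simp [adjSwapsFun_val, hi, hi', hsucc]
    · simp [adjSwapsFun_val, hi, hi']

/-- The product of the disjoint adjacent transpositions `(k k+1)` over all `k` with `p k`. -/
def adjSwaps (hlt : ∀ k, p k → k + 1 < n) (hadj : ∀ k, p k → ¬p (k + 1)) :
    Equiv.Perm (Fin n) :=
  (adjSwapsFun_involutive p hlt hadj).toPerm

lemma adjSwaps_val (hlt : ∀ k, p k → k + 1 < n) (hadj : ∀ k, p k → ¬p (k + 1)) (i : Fin n) :
    (adjSwaps p hlt hadj i : ℕ) =
      if p i then (i : ℕ) + 1 else if 0 < (i : ℕ) ∧ p (i - 1) then (i : ℕ) - 1 else i :=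
  adjSwapsFun_val p hlt i

end AdjacentSwaps

section

variable {n : ℕ}

lemma dL_le (σ ρ : Equiv.Perm (Fin n)) : dL n σ ρ ≤ n - 1 :=
  Finset.sup_le fun i _ => by have := (σ i).isLt; have := (ρ i).isLt; omega

lemma dL_eq_pred_of_le {σ ρ : Equiv.Perm (Fin n)} (i : Fin n)
    (h : n - 1 ≤ (((σ i : ℕ) : ℤ) - ((ρ i : ℕ) : ℤ)).natAbs) : dL n σ ρ = n - 1 :=
  (dL_le σ ρ).antisymm <| h.trans <|
    Finset.le_sup (f := fun j => (((σ j : ℕ) : ℤ) - ((ρ j : ℕ) : ℤ)).natAbs) (Finset.mem_univ i)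

lemma add_two_mem_peaks_iff (σ : Equiv.Perm (Fin n)) (k : ℕ) :
    k + 2 ∈ peaks n σ ↔ ∃ h : k + 2 < n,
      σ ⟨k, by omega⟩ < σ ⟨k + 1, by omega⟩ ∧ σ ⟨k + 2, h⟩ < σ ⟨k + 1, by omega⟩ := by
  simp only [peaks, Finset.mem_filter, Finset.mem_Icc]
  constructor
  · rintro ⟨_, _, _, h, hpeak⟩
    exact ⟨h, hpeak⟩
  · rintro ⟨h, hpeak⟩
    exact ⟨⟨by omega, by omega⟩, by omega, by omega, h, hpeak⟩

lemma two_le_of_mem_peaks {σ : Equiv.Perm (Fin n)} {j : ℕ} (hj : j ∈ peaks n σ) : 2 ≤ j := by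
  simp only [peaks, Finset.mem_filter, Finset.mem_Icc] at hj
  exact hj.1.1

structure IsPeakAdmissible (n : ℕ) (S : Finset ℕ) : Prop where
  two_le : ∀ ⦃j⦄, j ∈ S → 2 ≤ j
  lt : ∀ ⦃j⦄, j ∈ S → j < n
  succ_not_mem : ∀ ⦃j⦄, j ∈ S → j + 1 ∉ S

lemma isPeakAdmissible_peaks (σ : Equiv.Perm (Fin n)) : IsPeakAdmissible n (peaks n σ) where
  two_le _ := two_le_of_mem_peaks
  lt j hj := by
    obtain ⟨k, rfl⟩ := Nat.exists_eq_add_of_le' (two_le_of_mem_peaks hj)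
    exact ((add_two_mem_peaks_iff σ k).1 hj).1
  succ_not_mem j hj hj' := by
    obtain ⟨k, rfl⟩ := Nat.exists_eq_add_of_le' (two_le_of_mem_peaks hj)
    obtain ⟨_, _, hdesc⟩ := (add_two_mem_peaks_iff σ k).1 hj
    obtain ⟨_, hasc, _⟩ := (add_two_mem_peaks_iff σ (k + 1)).1 hj'
    exact lt_asymm hdesc hasc

namespace IsPeakAdmissible

variable {S : Finset ℕ}

lemma peaks_eq (hS : IsPeakAdmissible n S) {σ : Equiv.Perm (Fin n)}
    (h : ∀ k, k + 2 ∈ peaks n σ ↔ k + 2 ∈ S) :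
    peaks n σ = S := by
  ext j
  rcases Nat.lt_or_ge j 2 with hj | hj
  · exact iff_of_false (fun h' => by have := two_le_of_mem_peaks h'; omega)
      (fun h' => by have := hS.two_le h'; omega)
  · obtain ⟨k, rfl⟩ := Nat.exists_eq_add_of_le' hj
    exact h k

variable (hS : IsPeakAdmissible n S)

/-- `e[S]`. -/
def perm : Equiv.Perm (Fin n) :=
  adjSwaps (· + 1 ∈ S) (fun _ hk => hS.lt hk) (fun _ hk => hS.succ_not_mem hk)

lemma perm_val (i : Fin n) :
    (hS.perm i : ℕ) =
      if (i : ℕ) + 1 ∈ S then (i : ℕ) + 1 else if (i : ℕ) ∈ S then (i : ℕ) - 1 else i := by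
  rw [perm, adjSwaps_val]
  congr 1
  by_cases hi : 0 < (i : ℕ)
  · simp [hi, Nat.sub_add_cancel hi]
  · have : (i : ℕ) ∉ S := fun h => by have := hS.two_le h; omega
    simp [hi, this]

/-- `e*[S]`. -/
def revPerm : Equiv.Perm (Fin n) :=
  (adjSwaps (· + 2 ∈ S) (fun _ hk => by have := hS.lt hk; omega)
    (fun _ hk => hS.succ_not_mem hk)).trans Fin.revPerm

lemma revPerm_val (i : Fin n) :
    (hS.revPerm i : ℕ) = n - 1 -
      if (i : ℕ) + 2 ∈ S then (i : ℕ) + 1 else if (i : ℕ) + 1 ∈ S then (i : ℕ) - 1 else i := by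
  rw [revPerm, Equiv.trans_apply, Fin.revPerm_apply, Fin.val_rev, adjSwaps_val, Nat.sub_sub,
    Nat.add_comm 1]
  congr 2
  by_cases hi : 0 < (i : ℕ)
  · have hpred : (i : ℕ) - 1 + 2 = i + 1 := by omega
    simp [hi, hpred]
  · have : (i : ℕ) + 1 ∉ S := fun h => by have := hS.two_le h; omega
    simp [hi, this]

lemma add_two_mem_peaks_perm (k : ℕ) : k + 2 ∈ peaks n hS.perm ↔ k + 2 ∈ S := by
  rw [add_two_mem_peaks_iff]
  simp only [Fin.lt_def, perm_val, Nat.add_assoc, Nat.reduceAdd]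
  by_cases hk : k + 2 ∈ S
  · have h1 : k + 1 ∉ S := fun h => hS.succ_not_mem h hk
    have h3 : k + 3 ∉ S := hS.succ_not_mem hk
    simp only [hk, h1, h3, if_true, if_false, iff_true]
    refine ⟨hS.lt hk, ?_, by omega⟩
    split_ifs <;> omega
  · simp only [hk, if_false, iff_false]
    rintro ⟨_, hasc, hdesc⟩
    split_ifs at hasc hdesc <;> omega

lemma add_two_mem_peaks_revPerm (k : ℕ) : k + 2 ∈ peaks n hS.revPerm ↔ k + 2 ∈ S := by
  rw [add_two_mem_peaks_iff]
  simp only [Fin.lt_def, revPerm_val, Nat.add_assoc, Nat.reduceAdd]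
  by_cases hk : k + 2 ∈ S
  · have h1 : k + 1 ∉ S := fun h => hS.succ_not_mem h hk
    have h3 : k + 3 ∉ S := hS.succ_not_mem hk
    simp only [hk, h1, h3, if_true, if_false, iff_true]
    have := hS.lt hk
    refine ⟨this, by omega, ?_⟩
    split_ifs <;> omega
  · simp only [hk, if_false, iff_false]
    rintro ⟨_, hasc, hdesc⟩
    by_cases h3 : k + 3 ∈ S
    · have h4 : k + 4 ∉ S := hS.succ_not_mem h3
      simp only [h3, h4, if_true, if_false] at hdesc
      omega
    · simp only [h3, if_false] at hasc
      split_ifs at hasc <;> omega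

lemma peaks_perm : peaks n hS.perm = S :=
  hS.peaks_eq hS.add_two_mem_peaks_perm

lemma peaks_revPerm : peaks n hS.revPerm = S :=
  hS.peaks_eq hS.add_two_mem_peaks_revPerm

lemma dL_perm_revPerm (h : 2 ∉ S ∨ n - 1 ∉ S) : dL n hS.perm hS.revPerm = n - 1 := by
  rcases Nat.eq_zero_or_pos n with rfl | hn
  · have := dL_le hS.perm hS.revPerm
    omega
  have h0 : 0 ∉ S := fun h => by have := hS.two_le h; omega
  have h1 : 1 ∉ S := fun h => by have := hS.two_le h; omega
  rcases h with h2 | hlast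
  · apply dL_eq_pred_of_le ⟨0, hn⟩
    simp only [perm_val, revPerm_val, Nat.zero_add, h0, h1, h2, if_false]
    omega
  · have hn1 : n - 1 + 1 ∉ S := fun h => by have := hS.lt h; omega
    have hn2 : n - 1 + 2 ∉ S := fun h => by have := hS.lt h; omega
    apply dL_eq_pred_of_le ⟨n - 1, by omega⟩
    simp only [perm_val, revPerm_val, hlast, hn1, hn2, if_false]
    omega

end IsPeakAdmissible

end

theorem max_linf_on_peak_class_general (n : ℕ) (S : Finset ℕ)
    (hS : ∃ σ : Equiv.Perm (Fin n), peaks n σ = S)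
    (h : 2 ∉ S ∨ n - 1 ∉ S) :
    IsGreatest {d | ∃ σ ρ : Equiv.Perm (Fin n),
        peaks n σ = S ∧ peaks n ρ = S ∧ d = dL n σ ρ} (n - 1) := by
  obtain ⟨σ₀, rfl⟩ := hS
  have hadm := isPeakAdmissible_peaks σ₀
  refine ⟨⟨hadm.perm, hadm.revPerm, hadm.peaks_perm, hadm.peaks_revPerm,
    (hadm.dL_perm_revPerm h).symm⟩, ?_⟩
  rintro d ⟨σ, ρ, -, -, rfl⟩
  exact dL_le σ ρ

/-- if `2 ∉ S` or `n-1 ∉ S`, the maximum ℓ∞ distance on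
`P(S;n)` is `n - 1`. -/
theorem max_linf_on_peak_class (n : ℕ) (hn : 2 ≤ n) (S : Finset ℕ)
    (hS : ∃ σ : Equiv.Perm (Fin n), peaks n σ = S)
    (h : 2 ∉ S ∨ n - 1 ∉ S) :
    IsGreatest {d | ∃ σ ρ : Equiv.Perm (Fin n),
        peaks n σ = S ∧ peaks n ρ = S ∧ d = dL n σ ρ} (n - 1) :=
  max_linf_on_peak_class_general n S hS h
end

section
/- For n ≥ 4 and any admissible peak set S, there exist σ, ρ ∈ P(S;n) with d_H(σ,ρ) = n; i.e., the maximum Hamming distance between permutations in P(S;n) is n. -/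
/-!
Put the low values `0, …, c - 1` on the `c` non-peak positions, decreasing from left to right,
and the high values `c, …, n - 1` on the peaks; as peaks are neither adjacent nor at the ends,
this word has peak set `S`. Composing it with `blockRotate n m`, the cyclic shift down inside each
of the value blocks `[0, m)` and `[m, n)`, moves every entry when `2 ≤ m ≠ n - 1`. Only the values
`0` (at the last position) and `m` leave their relative order, so the peak set survives for
`m = c`, for `m = n` when position `n - 1` is not a peak, and for `m = c - 1` when position `2` is
not a peak. For `n ≥ 4` one of these moves every entry: if both `2` and `n - 1` are peaks, there
are two peaks and `c ≤ n - 2`.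
-/

open Finset

section PermOfInjOn

variable {n : ℕ} {f g : ℕ → ℕ}

noncomputable def permOfInjOn (n : ℕ) (f : ℕ → ℕ) (hf : Set.MapsTo f (Set.Iio n) (Set.Iio n))
    (hinj : Set.InjOn f (Set.Iio n)) : Equiv.Perm (Fin n) :=
  Equiv.ofBijective (fun i => ⟨f i, hf i.2⟩)
    (Finite.injective_iff_bijective.mp fun i j h => Fin.ext (hinj i.2 j.2 (congrArg Fin.val h)))

lemma dH_le (σ ρ : Equiv.Perm (Fin n)) : dH n σ ρ ≤ n :=
  (card_filter_le _ _).trans_eq (card_fin n)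

lemma dH_permOfInjOn (hf : Set.MapsTo f (Set.Iio n) (Set.Iio n)) (hfi : Set.InjOn f (Set.Iio n))
    (hg : Set.MapsTo g (Set.Iio n) (Set.Iio n)) (hgi : Set.InjOn g (Set.Iio n))
    (hfg : ∀ i < n, f i ≠ g i) : dH n (permOfInjOn n f hf hfi) (permOfInjOn n g hg hgi) = n := by
  rw [dH, filter_true_of_mem fun i _ => ?_, card_univ, Fintype.card_fin]
  exact fun h => hfg i i.2 (congrArg Fin.val h)

end PermOfInjOn

section Peaks

variable {n : ℕ} {S : Finset ℕ}

lemma peaks_subset_Icc (σ : Equiv.Perm (Fin n)) : peaks n σ ⊆ Icc 2 (n - 1) :=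
  filter_subset _ _

lemma succ_notMem_peaks {σ : Equiv.Perm (Fin n)} {j : ℕ} (hj : j ∈ peaks n σ) :
    j + 1 ∉ peaks n σ := by
  intro hj1
  obtain ⟨-, -, h2, h3, -, hdesc⟩ := mem_filter.mp hj
  obtain ⟨-, h1', h2', -, hasc, -⟩ := mem_filter.mp hj1
  have e1 : (⟨j + 1 - 2, h1'⟩ : Fin n) = ⟨j - 1, h2⟩ := Fin.ext (by grind)
  have e2 : (⟨j + 1 - 1, h2'⟩ : Fin n) = ⟨j, h3⟩ := Fin.ext (by grind)
  rw [e1, e2] at hasc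
  exact hasc.not_gt hdesc

/-- `S` holds 1-based positions: `i + 2 ∈ S` asks for a peak at the 0-based index `i + 1`. -/
def PeakShape (n : ℕ) (S : Finset ℕ) (f : ℕ → ℕ) : Prop :=
  (∀ i, i + 2 ∈ S → f i < f (i + 1) ∧ f (i + 2) < f (i + 1)) ∧
    ∀ i, i + 2 < n → i + 2 ∉ S → f (i + 1) < f i

lemma peaks_permOfInjOn {f : ℕ → ℕ} (hS : S ⊆ Icc 2 (n - 1))
    (hf : Set.MapsTo f (Set.Iio n) (Set.Iio n)) (hfi : Set.InjOn f (Set.Iio n))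
    (hshape : PeakShape n S f) : peaks n (permOfInjOn n f hf hfi) = S := by
  ext j
  simp only [peaks, mem_filter, mem_Icc]
  constructor
  · rintro ⟨⟨hj2, -⟩, _, _, hj, hasc, -⟩
    obtain ⟨i, rfl⟩ := Nat.exists_eq_add_of_le' hj2
    by_contra hiS
    exact (hshape.2 i hj hiS).not_gt hasc
  · intro hj
    obtain ⟨hj2, hjn⟩ := mem_Icc.mp (hS hj)
    obtain ⟨i, rfl⟩ := Nat.exists_eq_add_of_le' hj2
    exact ⟨⟨hj2, hjn⟩, by omega, by omega, by omega, hshape.1 i hj⟩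

end Peaks

section Words

variable {n : ℕ} {S : Finset ℕ}

def peakCount (S : Finset ℕ) : ℕ → ℕ := Nat.count (· + 1 ∈ S)

def nonpeakCount (S : Finset ℕ) : ℕ → ℕ := Nat.count (· + 1 ∉ S)

lemma peakCount_add_nonpeakCount (S : Finset ℕ) (i : ℕ) :
    peakCount S i + nonpeakCount S i = i := by
  induction i with
  | zero => simp [peakCount, nonpeakCount]
  | succ i ih =>
    simp only [peakCount, nonpeakCount, Nat.count_succ] at ih ⊢
    split_ifs <;> omega

lemma peakCount_lt {i j : ℕ} (hi : i + 1 ∈ S) (hij : i < j) : peakCount S i < peakCount S j :=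
  Nat.count_strict_mono (p := (· + 1 ∈ S)) hi hij

lemma nonpeakCount_lt {i j : ℕ} (hi : i + 1 ∉ S) (hij : i < j) :
    nonpeakCount S i < nonpeakCount S j :=
  Nat.count_strict_mono (p := (· + 1 ∉ S)) hi hij

lemma nonpeakCount_succ {i : ℕ} (hi : i + 1 ∉ S) :
    nonpeakCount S (i + 1) = nonpeakCount S i + 1 :=
  Nat.count_succ_eq_succ_count_iff.mpr hi

def peakWord (n : ℕ) (S : Finset ℕ) (i : ℕ) : ℕ :=
  if i + 1 ∈ S then nonpeakCount S n + peakCount S i else nonpeakCount S n - 1 - nonpeakCount S i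

lemma peakWord_mapsTo : Set.MapsTo (peakWord n S) (Set.Iio n) (Set.Iio n) := by
  intro i (hi : i < n)
  have hsum := peakCount_add_nonpeakCount S n
  show peakWord n S i < n
  unfold peakWord
  split_ifs with hiS
  · have := peakCount_lt hiS hi
    omega
  · omega

lemma peakWord_injOn : Set.InjOn (peakWord n S) (Set.Iio n) := by
  intro i (hi : i < n) j (hj : j < n) h
  unfold peakWord at h
  split_ifs at h with hiS hjS hjS
  · exact Nat.count_injective (p := (· + 1 ∈ S)) hiS hjS (by simpa [peakCount] using h)
  · have := nonpeakCount_lt hjS hj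
    omega
  · have := nonpeakCount_lt hiS hi
    omega
  · have := nonpeakCount_lt hiS hi
    have := nonpeakCount_lt hjS hj
    exact Nat.count_injective (p := (· + 1 ∉ S)) hiS hjS (by simp only [nonpeakCount] at *; omega)

/-- The product of the cycles `(0 m-1 m-2 … 1)` and `(m n-1 n-2 … m+1)`. -/
def blockRotate (n m v : ℕ) : ℕ := if v = 0 then m - 1 else if v = m then n - 1 else v - 1

lemma blockRotate_mapsTo {m : ℕ} (hm : m ≤ n) :
    Set.MapsTo (blockRotate n m) (Set.Iio n) (Set.Iio n) := by
  intro v (hv : v < n)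
  show blockRotate n m v < n
  unfold blockRotate
  split_ifs <;> omega

lemma blockRotate_injOn {m : ℕ} (hm : 1 ≤ m) : Set.InjOn (blockRotate n m) (Set.Iio n) := by
  intro v (hv : v < n) w (hw : w < n) h
  unfold blockRotate at h
  split_ifs at h <;> omega

lemma blockRotate_ne_self {m v : ℕ} (hm : 2 ≤ m) (hmn : m ≠ n - 1) (hv : v < n) :
    blockRotate n m v ≠ v := by
  unfold blockRotate
  split_ifs <;> omega

/-- The split points `m` for which `blockRotate n m ∘ peakWord n S` keeps the peak set `S`. -/
def IsPeakSafeSplit (n : ℕ) (S : Finset ℕ) (m : ℕ) : Prop :=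
  m = nonpeakCount S n ∨ (m = n ∧ n - 1 ∉ S) ∨ (m = nonpeakCount S n - 1 ∧ 2 ∉ S)

end Words

section Admissible

variable {n : ℕ} {S : Finset ℕ} (hS : S ⊆ Icc 2 (n - 1))
include hS

lemma nonpeakCount_pos {i : ℕ} (hi : 0 < i) : 0 < nonpeakCount S i :=
  nonpeakCount_lt (i := 0) (fun h => by simpa using (mem_Icc.mp (hS h)).1) hi

lemma nonpeakCount_pred_add_one (hn : 0 < n) :
    nonpeakCount S (n - 1) + 1 = nonpeakCount S n := by
  have hnS : n - 1 + 1 ∉ S := fun h => by have := (mem_Icc.mp (hS h)).2; omega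
  rw [← nonpeakCount_succ hnS, Nat.sub_add_cancel hn]

lemma exists_isPeakSafeSplit (hn : 4 ≤ n) :
    ∃ m, IsPeakSafeSplit n S m ∧ 2 ≤ m ∧ m ≤ n ∧ m ≠ n - 1 := by
  have hsum := peakCount_add_nonpeakCount S n
  have hlast := nonpeakCount_pred_add_one hS (by omega)
  have hpos := nonpeakCount_pos hS (show 0 < n - 1 by omega)
  by_cases hend : n - 1 ∈ S
  · have := peakCount_lt (i := n - 2) (j := n) (by rwa [show n - 2 + 1 = n - 1 by omega])
      (by omega)
    by_cases hstart : 2 ∈ S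
    · have := peakCount_lt (i := 1) hstart (show 1 < n - 2 by omega)
      exact ⟨_, .inl rfl, by omega, by omega, by omega⟩
    · have := nonpeakCount_lt (i := 1) hstart (show 1 < n - 1 by omega)
      have := nonpeakCount_pos hS (show 0 < 1 by omega)
      exact ⟨_, .inr (.inr ⟨rfl, hstart⟩), by omega, by omega, by omega⟩
  · exact ⟨n, .inr (.inl ⟨rfl, hend⟩), by omega, le_rfl, by omega⟩

lemma blockRotate_peakWord_descent {m i : ℕ} (hm : IsPeakSafeSplit n S m) (hin : i + 2 < n)
    (hi : i + 2 ∉ S) :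
    blockRotate n m (peakWord n S (i + 1)) < blockRotate n m (peakWord n S i) := by
  have hm' : m = nonpeakCount S n ∨ m = n ∨ m = nonpeakCount S n - 1 := by
    rcases hm with hm | ⟨hm, -⟩ | ⟨hm, -⟩ <;> simp [hm]
  have := peakCount_add_nonpeakCount S n
  have := nonpeakCount_lt hi (show i + 1 < n - 1 by omega)
  have := nonpeakCount_pos hS (show 0 < i + 1 by omega)
  have := nonpeakCount_pred_add_one hS (by omega)
  simp only [peakWord, blockRotate, if_neg hi]
  clear hm
  by_cases hl : i + 1 ∈ S
  · have := peakCount_lt (j := n) hl (by omega)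
    simp only [if_pos hl]
    split_ifs <;> omega
  · have := nonpeakCount_succ hl
    simp only [if_neg hl]
    split_ifs <;> omega

variable (hsep : ∀ j ∈ S, j + 1 ∉ S)
include hsep

lemma peakShape_peakWord : PeakShape n S (peakWord n S) := by
  refine ⟨fun i hi => ?_, fun i hin hi => ?_⟩
  · have hin : i + 2 < n := by have := (mem_Icc.mp (hS hi)).2; omega
    have hl : i + 1 ∉ S := fun h => hsep _ h hi
    have hr : i + 2 + 1 ∉ S := hsep _ hi
    have := nonpeakCount_lt hl (show i < n by omega)
    have := nonpeakCount_lt hr hin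
    simp only [peakWord, show i + 1 + 1 = i + 2 from rfl, if_pos hi, if_neg hl, if_neg hr]
    omega
  · have := nonpeakCount_lt hi (show i + 1 < n by omega)
    simp only [peakWord, if_neg hi]
    split_ifs with hl
    · omega
    · have := nonpeakCount_succ hl
      omega

lemma blockRotate_peakWord_peak {m i : ℕ} (hm : IsPeakSafeSplit n S m) (hi : i + 2 ∈ S) :
    blockRotate n m (peakWord n S i) < blockRotate n m (peakWord n S (i + 1)) ∧
      blockRotate n m (peakWord n S (i + 2)) < blockRotate n m (peakWord n S (i + 1)) := by
  have hin : i + 2 < n := by have := (mem_Icc.mp (hS hi)).2; omega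
  have hl : i + 1 ∉ S := fun h => hsep _ h hi
  have hr : i + 2 + 1 ∉ S := hsep _ hi
  -- `m = n` sends the value `0` of the last position to the top, and `m = c - 1` the value
  -- `c - 1` of the first position: neither may be next to a peak.
  have hm' : m = nonpeakCount S n ∨ (m = n ∧ i + 2 ≠ n - 1) ∨
      (m = nonpeakCount S n - 1 ∧ i ≠ 0) := by
    rcases hm with hm | ⟨hm, hn1⟩ | ⟨hm, h2⟩
    · exact .inl hm
    · exact .inr (.inl ⟨hm, fun h => hn1 (h ▸ hi)⟩)
    · exact .inr (.inr ⟨hm, fun h => h2 (by simpa [h] using hi)⟩)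
  have := peakCount_add_nonpeakCount S n
  have := peakCount_lt (j := n) hi (by omega)
  have := nonpeakCount_lt hl (show i < i + 2 by omega)
  have := nonpeakCount_lt hr hin
  have := nonpeakCount_pos hS (show 0 < i + 2 by omega)
  have := nonpeakCount_pred_add_one hS (by omega)
  have : i + 2 = n - 1 ∨ nonpeakCount S (i + 2) < nonpeakCount S (n - 1) :=
    (eq_or_ne _ _).imp_right fun h => nonpeakCount_lt hr (by omega)
  have : i = 0 ∨ 0 < nonpeakCount S i := (Nat.eq_zero_or_pos i).imp_right (nonpeakCount_pos hS)
  simp only [peakWord, blockRotate, show i + 1 + 1 = i + 2 from rfl, if_pos hi, if_neg hl,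
    if_neg hr]
  clear hm
  split_ifs <;> omega

lemma peakShape_blockRotate {m : ℕ} (hm : IsPeakSafeSplit n S m) :
    PeakShape n S (blockRotate n m ∘ peakWord n S) :=
  ⟨fun _ hi => blockRotate_peakWord_peak hS hsep hm hi,
    fun _ hin hi => blockRotate_peakWord_descent hS hm hin hi⟩

end Admissible

/-- for `n ≥ 4`, the maximum Hamming distance on `P(S;n)` is `n`. -/
theorem max_hamming_on_peak_class (n : ℕ) (hn : 4 ≤ n) (S : Finset ℕ)
    (hS : ∃ σ : Equiv.Perm (Fin n), peaks n σ = S) :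
    IsGreatest {d | ∃ σ ρ : Equiv.Perm (Fin n),
        peaks n σ = S ∧ peaks n ρ = S ∧ d = dH n σ ρ} n := by
  refine ⟨?_, fun d ⟨σ, ρ, _, _, hd⟩ => hd ▸ dH_le σ ρ⟩
  obtain ⟨σ₀, hσ₀⟩ := hS
  have hSub : S ⊆ Icc 2 (n - 1) := hσ₀ ▸ peaks_subset_Icc σ₀
  have hsep : ∀ j ∈ S, j + 1 ∉ S := hσ₀ ▸ fun j => succ_notMem_peaks
  obtain ⟨m, hm, hm2, hmn, hmn1⟩ := exists_isPeakSafeSplit hSub hn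
  have hρ := (blockRotate_mapsTo hmn).comp (peakWord_mapsTo (S := S))
  have hρi := (blockRotate_injOn (n := n) (by omega : 1 ≤ m)).comp peakWord_injOn
    (peakWord_mapsTo (S := S))
  refine ⟨_, _, peaks_permOfInjOn hSub peakWord_mapsTo peakWord_injOn
      (peakShape_peakWord hSub hsep),
    peaks_permOfInjOn hSub hρ hρi (peakShape_blockRotate hSub hsep hm),
    (dH_permOfInjOn _ _ _ _ fun i hi => ?_).symm⟩
  exact (blockRotate_ne_self hm2 hmn1 (peakWord_mapsTo hi)).symm
end
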